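/- arXiv:1401.6852 — 8 statements merged into one kernel-verified Lean document; each statement's English description precedes it below -/
import Mathlib

section
/- Let A be a unital C*-algebra, let G be a finite group, and let α : G → Aut(A) be an action of G on A. Then α has the Rokhlin property if and only if for every ε > 0 and every finite subset F ⊆ A there exist projections (p_g)_{g∈G} in A (i.e., p_g = p_g² = p_g*) with ∑_{g∈G} p_g = 1, such that ‖α_g(p_h) − p_{gh}‖ < ε for all g, h ∈ G and ‖p_g a − a p_g‖ < ε for all a ∈ F and g ∈ G. -/
/-!
Projections summing to `1` are mutually orthogonal positive contractions, so a partition of unity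
by projections is a Rokhlin tower. Conversely, if the `r g` are orthogonal contractions with
`∑ r h ≈ 1`, then `r g * r g - r g = r g * (∑ r h - 1) ≈ 0`, so the spectrum of `r g` clusters near
`0` and `1`, and continuous functional calculus with a step function turns `r g` into a nearby
projection `p g`. Writing `p g = r g * b g = b g * r g` keeps the `p g` orthogonal, so `∑ p g` is a
projection at distance `< 1` from `1`, hence equal to `1`. Approximate equivariance and
approximate commutation pass from `r g` to `p g` at a cost proportional to `‖p g - r g‖`.
-/

/-- The Rokhlin property for an action of a finite group `G` on a C*-algebra `A`. -/
def RokhlinProperty {G A : Type*} [Group G] [Fintype G] [NonUnitalCStarAlgebra A]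
    (α : G → (A ≃⋆ₐ[ℂ] A)) : Prop :=
  ∀ (ε : ℝ), 0 < ε → ∀ (F : Finset A),
    ∃ r : G → A,
      (∀ g, ∃ s, r g = star s * s) ∧
      (∀ g, ‖r g‖ ≤ 1) ∧
      (∀ g h, g ≠ h → r g * r h = 0) ∧
      (∀ g h, ‖α g (r h) - r (g * h)‖ < ε) ∧
      (∀ a ∈ F, ∀ g, ‖r g * a - a * r g‖ < ε) ∧
      (∀ a ∈ F, ‖(∑ g, r g) * a - a‖ < ε)

open Finset

/-- The step function used is `t * cutoffInv t`, so that the projection it produces from `a` is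
`a * cfc cutoffInv a = cfc cutoffInv a * a`; this keeps projections built from orthogonal elements
orthogonal. -/
noncomputable def cutoffInv (t : ℝ) : ℝ := min 1 (max 0 (4 * t - 1)) / max t (1 / 2)

@[fun_prop]
lemma continuous_cutoffInv : Continuous cutoffInv :=
  (continuous_const.min (continuous_const.max (by fun_prop))).div
    (continuous_id.max continuous_const) fun t => by positivity

lemma mul_cutoffInv_of_le {t : ℝ} (ht : t ≤ 1 / 4) : t * cutoffInv t = 0 := by
  simp [cutoffInv, max_eq_left (by linarith : 4 * t - 1 ≤ 0)]

lemma mul_cutoffInv_of_ge {t : ℝ} (ht : 1 / 2 ≤ t) : t * cutoffInv t = 1 := by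
  rw [cutoffInv, max_eq_right (by linarith), min_eq_left (by linarith), max_eq_left ht]
  field_simp

lemma abs_le_or_abs_sub_one_le_of_abs_mul_self_sub_le {t c : ℝ} (h : |t * t - t| ≤ c) :
    |t| ≤ 2 * c ∨ |t - 1| ≤ 2 * c := by
  rw [show t * t - t = t * (t - 1) by ring, abs_mul] at h
  rcases le_or_gt t (1 / 2) with ht | ht
  · left
    have : 1 / 2 ≤ |t - 1| := by rw [abs_sub_comm]; exact le_abs.2 (Or.inl (by linarith))
    nlinarith [abs_nonneg t]
  · right
    have : 1 / 2 ≤ |t| := le_abs.2 (Or.inl ht.le)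
    nlinarith [abs_nonneg (t - 1)]

lemma isIdempotentElem_mul_cutoffInv_and_abs_sub_le {t c : ℝ} (hc : c ≤ 1 / 8)
    (h : |t * t - t| ≤ c) :
    IsIdempotentElem (t * cutoffInv t) ∧ |t * cutoffInv t - t| ≤ 2 * c := by
  rcases abs_le_or_abs_sub_one_le_of_abs_mul_self_sub_le h with h0 | h1
  · rw [mul_cutoffInv_of_le (by linarith [le_abs_self t])]
    exact ⟨IsIdempotentElem.zero, by simpa using h0⟩
  · rw [mul_cutoffInv_of_ge (by linarith [neg_abs_le (t - 1)])]
    exact ⟨IsIdempotentElem.one, by rwa [abs_sub_comm]⟩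

lemma norm_mul_self_sub_le_of_orthogonal {R ι : Type*} [NormedRing R] [Fintype ι] {r : ι → R}
    (horth : ∀ i j, i ≠ j → r i * r j = 0) (i : ι) :
    ‖r i * r i - r i‖ ≤ ‖r i‖ * ‖∑ j, r j - 1‖ := by
  have : r i * r i - r i = r i * (∑ j, r j - 1) := by
    rw [mul_sub, mul_one, mul_sum, sum_eq_single i (fun j _ hji => horth i j hji.symm) (by simp)]
  exact this ▸ norm_mul_le _ _

lemma norm_mul_sub_mul_le {R : Type*} [NonUnitalNormedRing R] (p r a : R) :
    ‖p * a - a * p‖ ≤ ‖r * a - a * r‖ + 2 * ‖p - r‖ * ‖a‖ :=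
  calc ‖p * a - a * p‖ = ‖(r * a - a * r) + (p - r) * a - a * (p - r)‖ := by noncomm_ring
    _ ≤ ‖r * a - a * r‖ + ‖(p - r) * a‖ + ‖a * (p - r)‖ :=
        norm_sub_le_of_le (norm_add_le _ _) le_rfl
    _ ≤ ‖r * a - a * r‖ + ‖p - r‖ * ‖a‖ + ‖a‖ * ‖p - r‖ := by
        gcongr <;> exact norm_mul_le _ _
    _ = ‖r * a - a * r‖ + 2 * ‖p - r‖ * ‖a‖ := by ring

lemma IsStarProjection.eq_zero_of_norm_lt_one {E : Type*} [NonUnitalNormedRing E] [StarRing E]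
    [CStarRing E] {e : E} (he : IsStarProjection e) (h : ‖e‖ < 1) : e = 0 := by
  have : ‖e‖ * ‖e‖ = ‖e‖ := by
    rw [← CStarRing.norm_star_mul_self, he.isSelfAdjoint.star_eq, he.isIdempotentElem.eq]
  exact norm_eq_zero.1 (by nlinarith [norm_nonneg e])

lemma IsStarProjection.sum {ι R : Type*} [NonUnitalNonAssocSemiring R] [StarRing R] {p : ι → R}
    (s : Finset ι) (hp : ∀ i ∈ s, IsStarProjection (p i))
    (horth : ∀ i ∈ s, ∀ j ∈ s, i ≠ j → p i * p j = 0) :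
    IsStarProjection (∑ i ∈ s, p i) := by
  classical
  induction s using Finset.induction_on with
  | empty => simp [IsStarProjection.zero]
  | insert i s hi ih =>
    rw [sum_insert hi]
    refine (hp i (mem_insert_self i s)).add
      (ih (fun j hj => hp j (mem_insert_of_mem hj))
        fun j hj k hk => horth j (mem_insert_of_mem hj) k (mem_insert_of_mem hk)) ?_
    rw [mul_sum]
    exact sum_eq_zero fun j hj =>
      horth i (mem_insert_self i s) j (mem_insert_of_mem hj) (ne_of_mem_of_not_mem hj hi).symm

section CStarAlgebra

variable {A : Type*} [CStarAlgebra A]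

lemma IsStarProjection.mul_eq_zero_of_sum_eq_one {ι : Type*} [Fintype ι] {p : ι → A}
    (hp : ∀ i, IsStarProjection (p i)) (hsum : ∑ i, p i = 1) {i j : ι} (hij : i ≠ j) :
    p i * p j = 0 := by
  classical
  let _ := CStarAlgebra.spectralOrder A
  have _ := CStarAlgebra.spectralOrderedRing A
  have hle : p j ≤ 1 - p i := by
    rw [← hsum, ← sum_erase_eq_sub (mem_univ i)]
    exact single_le_sum (fun k _ => (hp k).nonneg) (mem_erase.2 ⟨hij.symm, mem_univ j⟩)
  have := ((hp i).one_sub.mul_right_and_mul_left_of_nonneg_of_le (hp j).nonneg hle).2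
  rwa [sub_mul, one_mul, sub_eq_self] at this

lemma IsSelfAdjoint.exists_isStarProjection_mul {a : A} (ha : IsSelfAdjoint a) {c : ℝ}
    (hc : c ≤ 1 / 8) (h : ‖a * a - a‖ ≤ c) :
    ∃ b : A, Commute a b ∧ IsStarProjection (a * b) ∧ ‖a * b - a‖ ≤ 2 * c := by
  have hab : a * cfc cutoffInv a = cfc (fun t => t * cutoffInv t) a := by
    rw [cfc_mul (fun t => t) cutoffInv a, cfc_id' ℝ a]
  have hspec (t : ℝ) (ht : t ∈ spectrum ℝ a) :
      IsIdempotentElem (t * cutoffInv t) ∧ |t * cutoffInv t - t| ≤ 2 * c := by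
    refine isIdempotentElem_mul_cutoffInv_and_abs_sub_le hc ?_
    refine (norm_apply_le_norm_cfc (fun t => t * t - t) a ht).trans ?_
    rwa [cfc_sub (fun t => t * t) (fun t => t) a, cfc_mul (fun t => t) (fun t => t) a,
      cfc_id' ℝ a]
  refine ⟨cfc cutoffInv a, ?_, ⟨?_, ?_⟩, ?_⟩
  · simpa only [cfc_id' ℝ a] using cfc_commute_cfc (fun t : ℝ => t) cutoffInv a
  · rw [hab, IsIdempotentElem, ← cfc_mul _ _ a]
    exact cfc_congr fun t ht => (hspec t ht).1
  · exact hab ▸ cfc_predicate _ a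
  · have hc0 : 0 ≤ c := (norm_nonneg _).trans h
    have hdiff : cfc (fun t => t * cutoffInv t - t) a = a * cfc cutoffInv a - a := by
      rw [cfc_sub (fun t => t * cutoffInv t) (fun t => t) a, cfc_id' ℝ a, hab]
    exact hdiff ▸ norm_cfc_le (by linarith) fun t ht => (hspec t ht).2

lemma exists_isStarProjection_partition_near {ι : Type*} [Fintype ι] {r : ι → A} {δ : ℝ}
    (hsa : ∀ i, IsSelfAdjoint (r i)) (hnorm : ∀ i, ‖r i‖ ≤ 1)
    (horth : ∀ i j, i ≠ j → r i * r j = 0) (hsum : ‖∑ i, r i - 1‖ ≤ δ) (hδ : 8 * δ ≤ 1)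
    (hδι : (2 * Fintype.card ι + 1) * δ < 1) :
    ∃ p : ι → A, (∀ i, IsStarProjection (p i)) ∧ ∑ i, p i = 1 ∧ ∀ i, ‖p i - r i‖ ≤ 2 * δ := by
  have hsq (i : ι) : ‖r i * r i - r i‖ ≤ δ :=
    (norm_mul_self_sub_le_of_orthogonal horth i).trans
      (by simpa using mul_le_mul (hnorm i) hsum (norm_nonneg _) zero_le_one)
  choose b hcomm hproj hnear using
    fun i => (hsa i).exists_isStarProjection_mul (by linarith) (hsq i)
  have hporth (i j : ι) (hij : i ≠ j) : r i * b i * (r j * b j) = 0 := by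
    rw [(hcomm i).eq, mul_assoc, ← mul_assoc (r i), horth i j hij, zero_mul, mul_zero]
  have hP : IsStarProjection (∑ i, r i * b i) :=
    .sum univ (fun i _ => hproj i) fun i _ j _ => hporth i j
  refine ⟨fun i => r i * b i, hproj, ?_, hnear⟩
  have hclose : ‖1 - ∑ i, r i * b i‖ < 1 :=
    calc ‖1 - ∑ i, r i * b i‖ = ‖-(∑ i, r i - 1) + ∑ i, (r i - r i * b i)‖ := by
          rw [sum_sub_distrib]; congr 1; abel
      _ ≤ ‖∑ i, r i - 1‖ + ∑ i, ‖r i * b i - r i‖ := by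
          refine (norm_add_le _ _).trans (add_le_add (norm_neg _).le ?_)
          simpa only [norm_sub_rev] using norm_sum_le univ fun i => r i - r i * b i
      _ ≤ δ + ∑ _i : ι, 2 * δ := by gcongr with i; exact hnear i
      _ < 1 := by rw [sum_const, card_univ, nsmul_eq_mul]; linarith
  exact (sub_eq_zero.1 (hP.one_sub.eq_zero_of_norm_lt_one hclose)).symm

end CStarAlgebra

section Rokhlin

variable {G A : Type*} [Group G] [Fintype G] [CStarAlgebra A]

def ProjectionRokhlinProperty (α : G → (A ≃⋆ₐ[ℂ] A)) : Prop :=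
  ∀ ε : ℝ, 0 < ε → ∀ F : Finset A,
    ∃ p : G → A,
      (∀ g, IsStarProjection (p g)) ∧
      ∑ g, p g = 1 ∧
      (∀ g h, ‖α g (p h) - p (g * h)‖ < ε) ∧
      (∀ a ∈ F, ∀ g, ‖p g * a - a * p g‖ < ε)

theorem ProjectionRokhlinProperty.rokhlinProperty {α : G → (A ≃⋆ₐ[ℂ] A)}
    (hα : ProjectionRokhlinProperty α) : RokhlinProperty α := by
  intro ε hε F
  obtain ⟨p, hp, hsum, hact, hcomm⟩ := hα ε hε F
  refine ⟨p, fun g => ⟨p g, ?_⟩, fun g => (hp g).norm_le, fun g h hgh =>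
    IsStarProjection.mul_eq_zero_of_sum_eq_one hp hsum hgh, hact, hcomm, fun a _ => ?_⟩
  · rw [(hp g).isSelfAdjoint.star_eq, (hp g).isIdempotentElem.eq]
  · simpa [hsum] using hε

theorem RokhlinProperty.projectionRokhlinProperty {α : G → (A ≃⋆ₐ[ℂ] A)}
    (hα : RokhlinProperty α) : ProjectionRokhlinProperty α := by
  classical
  intro ε hε F
  set n : ℝ := (Fintype.card G : ℝ)
  set M : ℝ := ∑ a ∈ F, ‖a‖
  have hn : 0 ≤ n := Nat.cast_nonneg _
  have hM : 0 ≤ M := sum_nonneg fun a _ => norm_nonneg a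
  obtain ⟨δ, hδ, hδK⟩ := exists_pos_mul_lt (lt_min hε one_pos) (2 * n + 4 * M + 8)
  have hδε : (2 * n + 4 * M + 8) * δ < ε := hδK.trans_le (min_le_left _ _)
  have hδ1 : (2 * n + 4 * M + 8) * δ < 1 := hδK.trans_le (min_le_right _ _)
  obtain ⟨r, hpos, hnorm, horth, hact, hcomm, hsum⟩ := hα δ hδ (insert 1 F)
  have hsa (g : G) : IsSelfAdjoint (r g) := by
    obtain ⟨s, hs⟩ := hpos g
    exact hs ▸ .star_mul_self s
  obtain ⟨p, hp, hpsum, hnear⟩ := exists_isStarProjection_partition_near hsa hnorm horth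
    (by simpa using (hsum 1 (mem_insert_self 1 F)).le) (by nlinarith) (by nlinarith)
  refine ⟨p, hp, hpsum, fun g h => ?_, fun a ha g => ?_⟩
  · calc ‖α g (p h) - p (g * h)‖
          = ‖α g (p h - r h) + (α g (r h) - r (g * h)) + (r (g * h) - p (g * h))‖ := by
            rw [map_sub]; abel_nf
      _ ≤ ‖p h - r h‖ + ‖α g (r h) - r (g * h)‖ + ‖r (g * h) - p (g * h)‖ := by
            refine norm_add₃_le.trans_eq ?_
            rw [StarAlgEquiv.norm_map]
      _ < 2 * δ + δ + 2 * δ :=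
            add_lt_add_of_lt_of_le (add_lt_add_of_le_of_lt (hnear h) (hact g h))
              (norm_sub_rev (r (g * h)) _ ▸ hnear (g * h))
      _ ≤ ε := by nlinarith
  · have haM : ‖a‖ ≤ M := single_le_sum (fun b _ => norm_nonneg b) ha
    calc ‖p g * a - a * p g‖ ≤ ‖r g * a - a * r g‖ + 2 * ‖p g - r g‖ * ‖a‖ :=
          norm_mul_sub_mul_le _ _ _
      _ < δ + 2 * (2 * δ) * M :=
          add_lt_add_of_lt_of_le (hcomm a (mem_insert_of_mem ha) g) (by gcongr; exact hnear g)
      _ ≤ ε := by nlinarith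

theorem rokhlinProperty_iff_projectionRokhlinProperty (α : G → (A ≃⋆ₐ[ℂ] A)) :
    RokhlinProperty α ↔ ProjectionRokhlinProperty α :=
  ⟨RokhlinProperty.projectionRokhlinProperty, ProjectionRokhlinProperty.rokhlinProperty⟩

end Rokhlin

theorem stmt2_general {G A : Type*} [Group G] [Fintype G] [CStarAlgebra A]
    (α : G → (A ≃⋆ₐ[ℂ] A)) :
    RokhlinProperty α ↔
      ∀ (ε : ℝ), 0 < ε → ∀ (F : Finset A),
        ∃ p : G → A,
          (∀ g, IsSelfAdjoint (p g) ∧ IsIdempotentElem (p g)) ∧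
          (∑ g, p g) = 1 ∧
          (∀ g h, ‖α g (p h) - p (g * h)‖ < ε) ∧
          (∀ a ∈ F, ∀ g, ‖p g * a - a * p g‖ < ε) := by
  have hproj (p : A) : IsStarProjection p ↔ IsSelfAdjoint p ∧ IsIdempotentElem p :=
    (isStarProjection_iff p).trans and_comm
  simpa only [ProjectionRokhlinProperty, hproj] using
    rokhlinProperty_iff_projectionRokhlinProperty α

/-- For a unital C*-algebra, the Rokhlin property is equivalent to the classical
formulation in terms of partitions of unity consisting of projections. -/
theorem stmt2 {G A : Type*} [Group G] [Fintype G] [CStarAlgebra A]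
    (α : G → (A ≃⋆ₐ[ℂ] A)) (hα : ∀ g h a, α (g * h) a = α g (α h a)) :
    RokhlinProperty α ↔
      ∀ (ε : ℝ), 0 < ε → ∀ (F : Finset A),
        ∃ p : G → A,
          (∀ g, IsSelfAdjoint (p g) ∧ IsIdempotentElem (p g)) ∧
          (∑ g, p g) = 1 ∧
          (∀ g h, ‖α g (p h) - p (g * h)‖ < ε) ∧
          (∀ a ∈ F, ∀ g, ‖p g * a - a * p g‖ < ε) :=
  stmt2_general α
end

section
/- Let A be a C*-algebra, let G be a finite group, and let α : G → Aut(A) be an action of G on A. Let 𝓜(A) denote the multiplier algebra of A with canonical *-embedding ι : A → 𝓜(A), and suppose for each g ∈ G we are given a *-automorphism ᾱ_g of 𝓜(A) with ᾱ_g(ι(a)) = ι(α_g(a)) for all a ∈ A. Assume α has the multiplier Rokhlin property: for every finite subset F ⊆ A and every ε > 0 there exist mutually orthogonal projections (p_g)_{g∈G} in 𝓜(A) with ∑_{g∈G} p_g = 1, ‖ᾱ_g(p_h) − p_{gh}‖ < ε for all g, h ∈ G, and ‖p_g ι(a) − ι(a) p_g‖ < ε for all g ∈ G and a ∈ F. Then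 α has the Rokhlin property. -/
open scoped MultiplierAlgebra

/-!
Averaging an approximate unit of `A` over `G` gives a `G`-invariant approximate unit
`u = e⋆ e`. For Rokhlin projections `p_g` with small tolerance, `r_g = p_g u p_g` is
`(e p_g)⋆ (e p_g)` and lies in `A`, since `A` is an ideal of `𝓜(A)`. Orthogonality comes from
`p_g p_h = 0`, approximate equivariance from the invariance of `u`, approximate centrality from
that of `p_g` and `u`, and `(∑ r_g) a ≈ a` from `∑ p_g = 1` and `u a ≈ a`.
-/

open Filter Topology

section NormEstimates

variable {B : Type*} [NonUnitalNormedRing B] {p q u x : B}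

lemma norm_mul_mul_le_one (hp : ‖p‖ ≤ 1) (hu : ‖u‖ ≤ 1) : ‖p * u * p‖ ≤ 1 :=
  calc ‖p * u * p‖ ≤ ‖p‖ * ‖u‖ * ‖p‖ := norm_mul₃_le
    _ ≤ 1 * 1 * 1 := by gcongr
    _ = 1 := by ring

lemma norm_conj_sub_conj_le (hp : ‖p‖ ≤ 1) (hq : ‖q‖ ≤ 1) (hu : ‖u‖ ≤ 1) :
    ‖q * u * q - p * u * p‖ ≤ 2 * ‖q - p‖ := by
  have split : q * u * q - p * u * p = (q - p) * u * q + p * u * (q - p) := by noncomm_ring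
  calc ‖q * u * q - p * u * p‖ ≤ ‖q - p‖ * ‖u‖ * ‖q‖ + ‖p‖ * ‖u‖ * ‖q - p‖ := by
        rw [split]; exact (norm_add_le _ _).trans (add_le_add norm_mul₃_le norm_mul₃_le)
    _ ≤ ‖q - p‖ * 1 * 1 + 1 * 1 * ‖q - p‖ := by gcongr
    _ = 2 * ‖q - p‖ := by ring

lemma norm_commutator_conj_le (hp : ‖p‖ ≤ 1) (hu : ‖u‖ ≤ 1) :
    ‖p * u * p * x - x * (p * u * p)‖ ≤
      2 * ‖p * x - x * p‖ + ‖u * x - x‖ + ‖x * u - x‖ := by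
  have split : p * u * p * x - x * (p * u * p) = p * u * (p * x - x * p) +
      p * ((u * x - x) - (x * u - x)) * p + (p * x - x * p) * u * p := by
    noncomm_ring
  calc ‖p * u * p * x - x * (p * u * p)‖
      ≤ ‖p‖ * ‖u‖ * ‖p * x - x * p‖ + ‖p‖ * (‖u * x - x‖ + ‖x * u - x‖) * ‖p‖
        + ‖p * x - x * p‖ * ‖u‖ * ‖p‖ := by
        rw [split]
        refine norm_add₃_le.trans (add_le_add (add_le_add norm_mul₃_le ?_) norm_mul₃_le)
        exact norm_mul₃_le.trans (by gcongr; exact norm_sub_le _ _)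
    _ ≤ 1 * 1 * ‖p * x - x * p‖ + 1 * (‖u * x - x‖ + ‖x * u - x‖) * 1
        + ‖p * x - x * p‖ * 1 * 1 := by
        gcongr
    _ = 2 * ‖p * x - x * p‖ + ‖u * x - x‖ + ‖x * u - x‖ := by ring

lemma norm_conj_mul_sub_le (hp : ‖p‖ ≤ 1) (hpp : IsIdempotentElem p) (hu : ‖u‖ ≤ 1) :
    ‖p * u * p * x - p * x‖ ≤ 2 * ‖p * x - x * p‖ + ‖u * x - x‖ := by
  have split : p * u * p * x - p * p * x =
      p * u * (p * x - x * p) - p * (p * x - x * p) + p * (u * x - x) * p := by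
    noncomm_ring
  rw [hpp.eq] at split
  calc ‖p * u * p * x - p * x‖
      ≤ ‖p‖ * ‖u‖ * ‖p * x - x * p‖ + ‖p‖ * ‖p * x - x * p‖
        + ‖p‖ * ‖u * x - x‖ * ‖p‖ := by
        rw [split]
        exact (norm_add_le _ _).trans (add_le_add ((norm_sub_le _ _).trans
          (add_le_add norm_mul₃_le (norm_mul_le _ _))) norm_mul₃_le)
    _ ≤ 1 * 1 * ‖p * x - x * p‖ + 1 * ‖p * x - x * p‖ + 1 * ‖u * x - x‖ * 1 := by
        gcongr
    _ = 2 * ‖p * x - x * p‖ + ‖u * x - x‖ := by ring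

end NormEstimates

lemma norm_sum_conj_mul_sub_le {ι B : Type*} [Fintype ι] [NormedRing B] {p : ι → B}
    {u x : B} {δ : ℝ} (hp : ∀ i, ‖p i‖ ≤ 1 ∧ IsIdempotentElem (p i)) (hsum : ∑ i, p i = 1)
    (hu : ‖u‖ ≤ 1) (hpx : ∀ i, ‖p i * x - x * p i‖ ≤ δ) (hux : ‖u * x - x‖ ≤ δ) :
    ‖(∑ i, p i * u * p i) * x - x‖ ≤ 3 * Fintype.card ι * δ := by
  have split : (∑ i, p i * u * p i) * x - x = ∑ i, (p i * u * p i * x - p i * x) := by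
    rw [Finset.sum_sub_distrib, ← Finset.sum_mul, ← Finset.sum_mul, hsum, one_mul]
  calc ‖(∑ i, p i * u * p i) * x - x‖
      ≤ ∑ i, (2 * ‖p i * x - x * p i‖ + ‖u * x - x‖) := by
        rw [split]
        exact (norm_sum_le _ _).trans
          (Finset.sum_le_sum fun i _ => norm_conj_mul_sub_le (hp i).1 (hp i).2 hu)
    _ ≤ ∑ _i : ι, (2 * δ + δ) := by gcongr with i; exact hpx i
    _ = 3 * Fintype.card ι * δ := by
        simp only [Finset.sum_const, Finset.card_univ, nsmul_eq_mul]
        ring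

lemma tendsto_mul_mul_of_tendsto_mul {ι R : Type*} [NonUnitalSeminormedRing R] {l : Filter ι}
    {f : ι → R} {m : R} (hf : ∀ᶠ i in l, ‖f i‖ ≤ 1) (h : Tendsto (fun i => f i * m) l (𝓝 m)) :
    Tendsto (fun i => f i * (f i * m)) l (𝓝 m) := by
  rw [tendsto_iff_norm_sub_tendsto_zero] at h ⊢
  refine squeeze_zero' (.of_forall fun _ => norm_nonneg _) ?_ (by simpa using h.const_mul 2)
  filter_upwards [hf] with i hi
  calc ‖f i * (f i * m) - m‖ = ‖f i * (f i * m - m) + (f i * m - m)‖ := by noncomm_ring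
    _ ≤ ‖f i‖ * ‖f i * m - m‖ + ‖f i * m - m‖ :=
        (norm_add_le _ _).trans (add_le_add_left (norm_mul_le _ _) _)
    _ ≤ 2 * ‖f i * m - m‖ := by nlinarith [norm_nonneg (f i * m - m)]

section OrbitAverage

variable {G A : Type*} [NonUnitalCStarAlgebra A] {α : G → (A ≃⋆ₐ[ℂ] A)}

lemma apply_apply_inv [Group G] (hα : ∀ g h a, α (g * h) a = α g (α h a)) (g : G) (a : A) :
    α g (α g⁻¹ a) = a := by
  have hone : α 1 (α 1 a) = α 1 a := by rw [← hα, one_mul]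
  rw [← hα, mul_inv_cancel, (α 1).injective hone]

variable [Fintype G]

variable (α) in
noncomputable def orbitAverage (x : A) : A :=
  (Fintype.card G : ℂ)⁻¹ • ∑ g, α g x

lemma star_orbitAverage (x : A) : star (orbitAverage α x) = orbitAverage α (star x) := by
  simp [orbitAverage, star_sum, map_star]

variable [Group G]

lemma norm_orbitAverage_le (x : A) : ‖orbitAverage α x‖ ≤ ‖x‖ := by
  have hcard : (0 : ℝ) < Fintype.card G := by exact_mod_cast Fintype.card_pos
  calc ‖orbitAverage α x‖ ≤ (Fintype.card G : ℝ)⁻¹ * ∑ g : G, ‖α g x‖ := by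
        rw [orbitAverage, norm_smul, norm_inv, Complex.norm_natCast]
        gcongr
        exact norm_sum_le _ _
    _ = ‖x‖ := by
        simp only [StarAlgEquiv.norm_map, Finset.sum_const, Finset.card_univ, nsmul_eq_mul]
        field_simp

lemma apply_orbitAverage (hα : ∀ g h a, α (g * h) a = α g (α h a)) (g : G) (x : A) :
    α g (orbitAverage α x) = orbitAverage α x := by
  simp only [orbitAverage, map_smul, map_sum, ← hα]
  congr 1
  exact Equiv.sum_comp (Equiv.mulLeft g) (fun k => α k x)

lemma tendsto_orbitAverage_mul (hα : ∀ g h a, α (g * h) a = α g (α h a)) {l : Filter A}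
    (hl : ∀ m, Tendsto (· * m) l (𝓝 m)) (m : A) :
    Tendsto (fun x => orbitAverage α x * m) l (𝓝 m) := by
  have hterm (g : G) : Tendsto (fun x => α g (x * α g⁻¹ m)) l (𝓝 m) := by
    simpa only [Function.comp_def, apply_apply_inv hα] using
      ((StarAlgEquiv.isometry (α g)).continuous.tendsto _).comp (hl (α g⁻¹ m))
  have hcard : (Fintype.card G : ℂ) ≠ 0 := by exact_mod_cast Fintype.card_ne_zero
  convert (tendsto_finsetSum Finset.univ fun g _ => hterm g).const_smul
    (Fintype.card G : ℂ)⁻¹ using 2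
  · simp [orbitAverage, Finset.sum_mul, smul_mul_assoc, apply_apply_inv hα]
  · rw [Finset.sum_const, Finset.card_univ, ← Nat.cast_smul_eq_nsmul ℂ, inv_smul_smul₀ hcard]

lemma exists_invariant_approxUnit (hα : ∀ g h a, α (g * h) a = α g (α h a)) (F : Finset A)
    {δ : ℝ} (hδ : 0 < δ) :
    ∃ u : A, (∃ e, u = star e * e) ∧ ‖u‖ ≤ 1 ∧ (∀ g, α g u = u) ∧
      ∀ a ∈ F, ‖u * a - a‖ < δ ∧ ‖a * u - a‖ < δ := by
  let := CStarAlgebra.spectralOrder A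
  have := CStarAlgebra.spectralOrderedRing A
  have hl := CStarAlgebra.increasingApproximateUnit A
  set l := CStarAlgebra.approximateUnit A
  set ψ : A → A := fun x => star (orbitAverage α x) * orbitAverage α x
  have hright (m : A) : Tendsto (ψ · * m) l (𝓝 m) := by
    refine (tendsto_mul_mul_of_tendsto_mul ?_
      (tendsto_orbitAverage_mul hα hl.tendsto_mul_right m)).congr' ?_
    · filter_upwards [hl.eventually_norm] with x hx using (norm_orbitAverage_le x).trans hx
    · filter_upwards [hl.eventually_isSelfAdjoint] with x hx
      simp only [ψ, star_orbitAverage, hx.star_eq, mul_assoc]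
  have hleft (m : A) : Tendsto (m * ψ ·) l (𝓝 m) :=
    tendsto_map'_iff.mp <| (CStarAlgebra.tendsto_mul_left_iff_tendsto_mul_right
      (l := l.map ψ) (eventually_map.mpr (.of_forall fun _ => .star_mul_self _))).mpr
      (fun m => tendsto_map'_iff.mpr (hright m)) m
  have hF : ∀ᶠ x in l, ‖ψ x‖ ≤ 1 ∧ ∀ a ∈ F, ‖ψ x * a - a‖ < δ ∧ ‖a * ψ x - a‖ < δ := by
    refine (hl.eventually_norm.mono fun x hx => ?_).and <| (eventually_all_finset F).mpr
      fun a _ => ?_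
    · rw [CStarRing.norm_star_mul_self, ← one_mul 1]
      have hψ := (norm_orbitAverage_le (α := α) x).trans hx
      gcongr
    · simp only [← dist_eq_norm]
      exact ((Metric.tendsto_nhds.mp (hright a)) δ hδ).and ((Metric.tendsto_nhds.mp (hleft a)) δ hδ)
  obtain ⟨x, hx1, hxF⟩ := hF.exists
  refine ⟨ψ x, ⟨_, rfl⟩, hx1, fun g => ?_, hxF⟩
  simp only [ψ, map_mul, map_star, apply_orbitAverage hα]

end OrbitAverage

local notation "ι" => DoubleCentralizer.coeHom (𝕜 := ℂ)

namespace DoubleCentralizer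

variable {A : Type*} [NonUnitalCStarAlgebra A]

lemma norm_coeHom (a : A) : ‖ι a‖ = ‖a‖ := by
  rw [coeHom_apply, ← norm_fst, coe_fst, ContinuousLinearMap.opNorm_mul_apply]

lemma coeHom_injective : Function.Injective (ι : A → 𝓜(ℂ, A)) :=
  (AddMonoidHomClass.isometry_of_norm _ norm_coeHom).injective

lemma coeHom_mul (a : A) (p : 𝓜(ℂ, A)) : ι a * p = ι (p.snd a) := by
  ext x : 3
  · exact (p.central a x).symm
  · -- left multiplication is faithful, so it suffices to compare after multiplying by any `w`
    refine (ContinuousLinearMap.isometry_mul ℂ A).injective (ContinuousLinearMap.ext fun w => ?_)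
    change p.snd (x * a) * w = x * p.snd a * w
    rw [p.central, mul_assoc, ← p.central, mul_assoc]

lemma coeHom_star_snd_mul_snd {p : 𝓜(ℂ, A)} (hp : IsSelfAdjoint p) (e : A) :
    ι (star (p.snd e) * p.snd e) = p * ι (star e * e) * p := by
  rw [map_mul, map_star, ← coeHom_mul, star_mul, hp.star_eq, map_mul, map_star]
  noncomm_ring

end DoubleCentralizer

open DoubleCentralizer in
/-- If an action of a finite group on a C*-algebra has the multiplier Rokhlin property,
then it has the Rokhlin property. Here `𝓜(ℂ, A)` is the multiplier algebra of `A`,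
`DoubleCentralizer.coe ℂ` is the canonical embedding `A → 𝓜(ℂ, A)`, and `αM` is the
extension of the action to the multiplier algebra. -/
theorem stmt3 {G A : Type*} [Group G] [Fintype G] [NonUnitalCStarAlgebra A]
    (α : G → (A ≃⋆ₐ[ℂ] A)) (hα : ∀ g h a, α (g * h) a = α g (α h a))
    (αM : G → (𝓜(ℂ, A) ≃⋆ₐ[ℂ] 𝓜(ℂ, A)))
    (hαM : ∀ (g : G) (a : A),
      αM g (DoubleCentralizer.coe ℂ a) = DoubleCentralizer.coe ℂ (α g a))
    (hMultRokhlin : ∀ (F : Finset A) (ε : ℝ), 0 < ε →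
      ∃ p : G → 𝓜(ℂ, A),
        (∀ g, IsSelfAdjoint (p g) ∧ IsIdempotentElem (p g)) ∧
        (∀ g h, g ≠ h → p g * p h = 0) ∧
        (∑ g, p g) = 1 ∧
        (∀ g h, ‖αM g (p h) - p (g * h)‖ < ε) ∧
        (∀ a ∈ F, ∀ g,
          ‖p g * DoubleCentralizer.coe ℂ a - DoubleCentralizer.coe ℂ a * p g‖ < ε)) :
    RokhlinProperty α := by
  intro ε hε F
  set n : ℝ := (Fintype.card G : ℝ)
  have hn : 1 ≤ n := Nat.one_le_cast.mpr Fintype.card_pos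
  set η := ε / (4 * n)
  have hη : 0 < η := by positivity
  have h4η : 4 * η ≤ ε := by rw [show 4 * η = ε / n by ring]; exact div_le_self hε.le hn
  have h3nη : 3 * n * η < ε := by
    rw [show 3 * n * η = 3 / 4 * ε by simp only [η]; field_simp]; linarith
  obtain ⟨_, ⟨e, rfl⟩, hu1, hαu, hu⟩ := exists_invariant_approxUnit hα F hη
  obtain ⟨p, hp, horth, hsum, hequiv, hcomm⟩ := hMultRokhlin F η hη
  set U := ι (star e * e)
  set r : G → A := fun g => star ((p g).snd e) * (p g).snd e
  have hrs (g : G) : ∃ s, r g = star s * s := ⟨_, rfl⟩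
  have hr (g : G) : ι (r g) = p g * U * p g := coeHom_star_snd_mul_snd (hp g).1 e
  clear_value r
  have hpn (g : G) : ‖p g‖ ≤ 1 := IsStarProjection.norm_le _ ⟨(hp g).2, (hp g).1⟩
  have hU : ‖U‖ ≤ 1 := by rwa [norm_coeHom]
  have hαι (g : G) (a : A) : αM g (ι a) = ι (α g a) := hαM g a
  have hαU (g : G) : αM g U = U := (hαι g _).trans (congrArg ι (hαu g))
  have hUF : ∀ a ∈ F, ‖U * ι a - ι a‖ < η ∧ ‖ι a * U - ι a‖ < η := by
    simpa only [U, ← map_mul, ← map_sub, norm_coeHom] using hu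
  have hpF : ∀ a ∈ F, ∀ g, ‖p g * ι a - ι a * p g‖ < η := hcomm
  refine ⟨r, hrs, fun g => ?_, fun g h hgh => coeHom_injective ?_, fun g h => ?_,
    fun a ha g => ?_, fun a ha => ?_⟩
  · rw [← norm_coeHom, hr]
    exact norm_mul_mul_le_one (hpn g) hU
  · rw [map_mul, hr, hr, map_zero, show p g * U * p g * (p h * U * p h) =
      p g * U * (p g * p h) * U * p h by noncomm_ring, horth g h hgh, mul_zero, zero_mul, zero_mul]
  · rw [← norm_coeHom, map_sub, ← hαι, hr, hr, map_mul, map_mul, hαU]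
    have hq : ‖αM g (p h)‖ ≤ 1 := (StarAlgEquiv.norm_map _ _).trans_le (hpn h)
    exact (norm_conj_sub_conj_le (hpn _) hq hU).trans_lt (by linarith [hequiv g h])
  · obtain ⟨hUa, haU⟩ := hUF a ha
    rw [← norm_coeHom, map_sub, map_mul, map_mul, hr]
    exact (norm_commutator_conj_le (hpn g) hU).trans_lt (by linarith [hpF a ha g])
  · rw [← norm_coeHom, map_sub, map_mul, map_sum]
    simp only [hr]
    exact (norm_sum_conj_mul_sub_le (fun g => ⟨hpn g, (hp g).2⟩) hsum hU
      (fun g => (hpF a ha g).le) (hUF a ha).1.le).trans_lt h3nη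
end

section
/- Let X = {1/n : n ∈ ℕ, n ≥ 1} ⊆ ℝ with the subspace topology, and let φ : X → X be the map defined by φ(1/(2n−1)) = 1/(2n) and φ(1/(2n)) = 1/(2n−1) for all n ≥ 1 (so φ is a homeomorphism with φ ∘ φ = id). Let α be the *-automorphism of C₀(X) given by α(f) = f ∘ φ; then α² = id, so α generates an action of ℤ/2ℤ on C₀(X). This action has the Rokhlin property. -/
open scoped ZeroAtInfty

/-- The space `X = {1/n : n ∈ ℕ, n ≥ 1} ⊆ ℝ`, with the subspace topology. -/
def Xset : Set ℝ := {x : ℝ | ∃ n : ℕ, 0 < n ∧ x = 1 / n}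

/-!
Every point of `X` is isolated, so the indicator of a finite subset of `X` lies in `C₀(X)`. The
sets `{1/n : n ≤ 2N, n even}` and `{1/n : n ≤ 2N, n odd}` are exchanged by `φ`, because
`{1/n : n ≤ 2N}` is a union of the orbits `{1/(2k-1), 1/(2k)}`. Their indicators are therefore
orthogonal projections permuted exactly by the action. They commute with everything because
`C₀(X)` is commutative, and their sum is the indicator of `{1/n : n ≤ 2N}`. For `N` large this
indicator is the identity on every element of `F` up to `ε`, since those elements vanish at
infinity.
-/

open Filter

namespace ZeroAtInftyContinuousMap

variable {X : Type*} [TopologicalSpace X]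

lemma norm_le_of_forall {β : Type*} [SeminormedAddCommGroup β] {f : C₀(X, β)} {C : ℝ}
    (hC : 0 ≤ C) (h : ∀ x, ‖f x‖ ≤ C) : ‖f‖ ≤ C :=
  (BoundedContinuousFunction.norm_le hC).2 h

lemma exists_isCompact_forall_norm_lt {β : Type*} [SeminormedAddCommGroup β]
    (F : Finset C₀(X, β)) {ε : ℝ} (hε : 0 < ε) :
    ∃ K : Set X, IsCompact K ∧ ∀ a ∈ F, ∀ x ∉ K, ‖a x‖ < ε := by
  have hsmall : ∀ᶠ x in cocompact X, ∀ a ∈ F, ‖a x‖ < ε :=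
    (eventually_all_finset F).2 fun a _ =>
      NormedAddGroup.tendsto_nhds_zero.1 (zero_at_infty a) ε hε
  obtain ⟨K, hK, hKc⟩ := mem_cocompact.1 hsmall
  exact ⟨K, hK, fun a ha x hx => hKc hx a ha⟩

variable [DiscreteTopology X]

noncomputable def finiteIndicator {s : Set X} (hs : s.Finite) : C₀(X, ℂ) where
  toFun := s.indicator 1
  continuous_toFun := continuous_of_discreteTopology
  zero_at_infty' := tendsto_const_nhds.congr' <| by
    filter_upwards [hs.isCompact.compl_mem_cocompact] with x hx
    exact (Set.indicator_of_notMem hx _).symm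

variable {s t : Set X} (hs : s.Finite) (ht : t.Finite)

@[simp]
lemma finiteIndicator_apply (x : X) : finiteIndicator hs x = s.indicator 1 x := rfl

lemma star_mul_self_finiteIndicator :
    star (finiteIndicator hs) * finiteIndicator hs = finiteIndicator hs := by
  ext x
  by_cases hx : x ∈ s <;> simp [hx]

lemma norm_finiteIndicator_le : ‖finiteIndicator hs‖ ≤ 1 :=
  norm_le_of_forall zero_le_one fun x => by by_cases hx : x ∈ s <;> simp [hx]

lemma finiteIndicator_mul_of_disjoint (hst : Disjoint s t) :
    finiteIndicator hs * finiteIndicator ht = 0 := by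
  ext x
  by_cases hx : x ∈ s
  · simp [hx, Set.disjoint_left.1 hst hx]
  · simp [hx]

lemma finiteIndicator_add_of_disjoint (hst : Disjoint s t) :
    finiteIndicator hs + finiteIndicator ht = finiteIndicator (hs.union ht) := by
  ext x
  simp [Set.indicator_union_of_disjoint hst]

lemma norm_finiteIndicator_mul_sub_le {a : C₀(X, ℂ)} {C : ℝ} (hC : 0 ≤ C)
    (ha : ∀ x ∉ s, ‖a x‖ ≤ C) : ‖finiteIndicator hs * a - a‖ ≤ C :=
  norm_le_of_forall hC fun x => by
    by_cases hx : x ∈ s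
    · simp [hx, hC]
    · simpa [hx] using ha x hx

lemma apply_finiteIndicator_eq_preimage (e : C₀(X, ℂ) ≃⋆ₐ[ℂ] C₀(X, ℂ)) {φ : X → X}
    (he : ∀ f x, e f x = f (φ x)) (hst : φ ⁻¹' t = s) :
    e (finiteIndicator ht) = finiteIndicator hs := by
  ext x
  rw [he, finiteIndicator_apply, finiteIndicator_apply, ← hst]
  rfl

end ZeroAtInftyContinuousMap

namespace Xset

noncomputable def index (x : Xset) : ℕ := ⌊(x : ℝ)⁻¹⌋₊

lemma natCast_index (x : Xset) : (index x : ℝ) = (x : ℝ)⁻¹ := by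
  obtain ⟨n, -, hn⟩ := x.2
  simp [index, hn]

lemma eq_one_div_index (x : Xset) : (x : ℝ) = 1 / index x := by
  rw [natCast_index, one_div, inv_inv]

lemma index_eq_of_coe_eq {x : Xset} {n : ℕ} (h : (x : ℝ) = 1 / n) : index x = n := by
  have : (index x : ℝ) = n := by rw [natCast_index, h, one_div, inv_inv]
  exact_mod_cast this

lemma index_pos (x : Xset) : 0 < index x := by
  obtain ⟨n, hn, hx⟩ := x.2
  rwa [index_eq_of_coe_eq hx]

lemma index_injective : Function.Injective index := fun x y h =>
  Subtype.ext <| by rw [eq_one_div_index x, eq_one_div_index y, h]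

lemma continuous_index : Continuous index := by
  rw [Nat.isClosedEmbedding_coe_real.isEmbedding.continuous_iff]
  have : ((↑) : ℕ → ℝ) ∘ index = fun x : Xset => (x : ℝ)⁻¹ := funext natCast_index
  rw [this]
  exact continuous_subtype_val.inv₀ fun x => by simp [eq_one_div_index x, (index_pos x).ne']

instance : DiscreteTopology Xset :=
  .of_continuous_injective continuous_index index_injective

lemma finite_setOf_index_le (M : ℕ) : {x | index x ≤ M}.Finite :=
  (Set.finite_Iic M).preimage index_injective.injOn

def SwapsPairs (φ : Xset → Xset) : Prop :=
  ∀ n : ℕ, 1 ≤ n →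
    ∀ (h1 : (1 : ℝ) / (2 * (n : ℝ) - 1) ∈ Xset) (h2 : (1 : ℝ) / (2 * (n : ℝ)) ∈ Xset),
      φ ⟨1 / (2 * (n : ℝ) - 1), h1⟩ = ⟨1 / (2 * (n : ℝ)), h2⟩ ∧
      φ ⟨1 / (2 * (n : ℝ)), h2⟩ = ⟨1 / (2 * (n : ℝ) - 1), h1⟩

namespace SwapsPairs

variable {φ : Xset → Xset}

lemma index_apply_of_pair (hφ : SwapsPairs φ) {n : ℕ} (hn : 1 ≤ n) {x : Xset} :
    (index x = 2 * n - 1 → index (φ x) = 2 * n) ∧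
      (index x = 2 * n → index (φ x) = 2 * n - 1) := by
  have hodd : ((2 * n - 1 : ℕ) : ℝ) = 2 * n - 1 := by
    rw [Nat.cast_sub (by omega)]
    push_cast
    ring
  have heven : ((2 * n : ℕ) : ℝ) = 2 * n := by push_cast; ring
  have h1 : (1 : ℝ) / (2 * n - 1) ∈ Xset := ⟨2 * n - 1, by omega, by rw [hodd]⟩
  have h2 : (1 : ℝ) / (2 * n) ∈ Xset := ⟨2 * n, by omega, by rw [heven]⟩
  obtain ⟨hφ1, hφ2⟩ := hφ n hn h1 h2
  constructor
  · intro hx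
    obtain rfl : x = ⟨_, h1⟩ := Subtype.ext (by rw [eq_one_div_index, hx, hodd])
    rw [hφ1]
    exact index_eq_of_coe_eq (by rw [heven])
  · intro hx
    obtain rfl : x = ⟨_, h2⟩ := Subtype.ext (by rw [eq_one_div_index, hx, heven])
    rw [hφ2]
    exact index_eq_of_coe_eq (by rw [hodd])

lemma index_apply (hφ : SwapsPairs φ) (x : Xset) :
    index x % 2 = 1 ∧ index (φ x) = index x + 1 ∨
      index x % 2 = 0 ∧ index (φ x) + 1 = index x := by
  have hpos := index_pos x
  obtain ⟨k, hk | hk⟩ := Nat.even_or_odd' (index x)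
  · have := (hφ.index_apply_of_pair (n := k) (x := x) (by omega)).2 hk
    omega
  · have := (hφ.index_apply_of_pair (n := k + 1) (x := x) (by omega)).1 (by omega)
    omega

lemma index_apply_le_iff (hφ : SwapsPairs φ) {M : ℕ} (x : Xset) :
    index (φ x) ≤ 2 * M ↔ index x ≤ 2 * M := by
  rcases hφ.index_apply x with h | h <;> omega

lemma natCast_index_apply (hφ : SwapsPairs φ) (x : Xset) :
    (index (φ x) : ZMod 2) = index x + 1 := by
  rw [← Nat.cast_one, ← Nat.cast_add, ZMod.natCast_eq_natCast_iff']
  rcases hφ.index_apply x with h | h <;> omega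

end SwapsPairs

def rokhlinSet (N : ℕ) (p : ZMod 2) : Set Xset :=
  {x | index x ≤ 2 * N ∧ (index x : ZMod 2) = p}

variable (N : ℕ)

lemma finite_rokhlinSet (p : ZMod 2) : (rokhlinSet N p).Finite :=
  (finite_setOf_index_le (2 * N)).subset fun _ hx => hx.1

lemma disjoint_rokhlinSet {p q : ZMod 2} (hpq : p ≠ q) :
    Disjoint (rokhlinSet N p) (rokhlinSet N q) :=
  Set.disjoint_left.2 fun _ hp hq => hpq (hp.2.symm.trans hq.2)

lemma rokhlinSet_zero_union_one : rokhlinSet N 0 ∪ rokhlinSet N 1 = {x | index x ≤ 2 * N} := by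
  ext x
  rcases CharTwo.natCast_cases (R := ZMod 2) (index x) with h | h <;> simp [rokhlinSet, h]

lemma SwapsPairs.preimage_rokhlinSet {φ : Xset → Xset} (hφ : SwapsPairs φ) (p : ZMod 2) :
    φ ⁻¹' rokhlinSet N p = rokhlinSet N (p + 1) := by
  ext x
  simp only [rokhlinSet, Set.mem_preimage, Set.mem_ofPred_eq, hφ.index_apply_le_iff,
    hφ.natCast_index_apply, CharTwo.add_eq_iff_eq_add]

end Xset

open ZeroAtInftyContinuousMap Xset

lemma apply_finiteIndicator_rokhlinSet {φ : Xset → Xset} (hφ : SwapsPairs φ)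
    (α : Multiplicative (ZMod 2) → (C₀(Xset, ℂ) ≃⋆ₐ[ℂ] C₀(Xset, ℂ)))
    (hα : ∀ g h f, α (g * h) f = α g (α h f))
    (hαφ : ∀ (f : C₀(Xset, ℂ)) (x : Xset), α (.ofAdd 1) f x = f (φ x)) (N : ℕ)
    (g h : Multiplicative (ZMod 2)) :
    α g (finiteIndicator (finite_rokhlinSet N h.toAdd)) =
      finiteIndicator (finite_rokhlinSet N (g * h).toAdd) := by
  obtain rfl | rfl : g = 1 ∨ g = .ofAdd 1 := by revert g; decide
  · rw [one_mul]
    -- `α 1` is an injective idempotent, hence the identity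
    exact (α 1).injective (by simpa using (hα 1 1 _).symm)
  · refine apply_finiteIndicator_eq_preimage _ _ _ hαφ ?_
    rw [hφ.preimage_rokhlinSet, toAdd_mul, toAdd_ofAdd, add_comm]

/-- The `ℤ/2ℤ`-action on `C₀(X)` induced by the homeomorphism of
`X = {1/n : n ≥ 1}` swapping `1/(2n-1)` and `1/(2n)` has the Rokhlin property. -/
theorem stmt4 (φ : Xset → Xset)
    (hφval : ∀ n : ℕ, 1 ≤ n →
      ∀ (h1 : (1 : ℝ) / (2 * (n : ℝ) - 1) ∈ Xset) (h2 : (1 : ℝ) / (2 * (n : ℝ)) ∈ Xset),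
        φ ⟨1 / (2 * (n : ℝ) - 1), h1⟩ = ⟨1 / (2 * (n : ℝ)), h2⟩ ∧
        φ ⟨1 / (2 * (n : ℝ)), h2⟩ = ⟨1 / (2 * (n : ℝ) - 1), h1⟩)
    (α : Multiplicative (ZMod 2) → (C₀(Xset, ℂ) ≃⋆ₐ[ℂ] C₀(Xset, ℂ)))
    (hα : ∀ g h f, α (g * h) f = α g (α h f))
    (hαval : ∀ (f : C₀(Xset, ℂ)) (x : Xset),
      α (Multiplicative.ofAdd (1 : ZMod 2)) f x = f (φ x)) :
    RokhlinProperty α := by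
  intro ε hε F
  obtain ⟨K, hK, hFK⟩ := exists_isCompact_forall_norm_lt F (half_pos hε)
  obtain ⟨N, hN⟩ := (hK.finite_of_discrete.image index).bddAbove
  let r g := finiteIndicator (finite_rokhlinSet N (Multiplicative.toAdd g))
  have hsum :
      ∑ g, r g = finiteIndicator ((finite_rokhlinSet N 0).union (finite_rokhlinSet N 1)) := by
    rw [← Multiplicative.ofAdd.sum_comp]
    exact (Fin.sum_univ_two _).trans
      (finiteIndicator_add_of_disjoint _ _ (disjoint_rokhlinSet N zero_ne_one))
  refine ⟨r, fun g => ⟨r g, (star_mul_self_finiteIndicator _).symm⟩,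
    fun g => norm_finiteIndicator_le _,
    fun g h hgh => finiteIndicator_mul_of_disjoint _ _ (disjoint_rokhlinSet N hgh),
    fun g h => by simpa [r, apply_finiteIndicator_rokhlinSet hφval α hα hαval] using hε,
    fun a _ g => by simpa [mul_comm] using hε, fun a ha => ?_⟩
  rw [hsum]
  refine (norm_finiteIndicator_mul_sub_le _ (half_pos hε).le fun x hx => ?_).trans_lt
    (half_lt_self hε)
  refine (hFK a ha x fun hxK => hx ?_).le
  rw [rokhlinSet_zero_union_one]
  exact (hN ⟨x, hxK, rfl⟩).trans (by omega)
end

section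
/- Let A be a C*-algebra, let G be a finite group, and let α : G → Aut(A) be an action of G on A with the Rokhlin property. Let H be a subgroup of G. Then the restriction of α to H (the action h ↦ α_h of H on A) has the Rokhlin property. -/
open Finset

theorem Finset.sum_pow_succ_of_mul_eq_zero {ι R : Type*} [Semiring R] (s : Finset ι) {p : ι → R}
    (hp : ∀ i j, i ≠ j → p i * p j = 0) (n : ℕ) :
    (∑ i ∈ s, p i) ^ (n + 1) = ∑ i ∈ s, p i ^ (n + 1) := by
  induction n with
  | zero => simp
  | succ n ih =>
    rw [pow_succ, ih, sum_mul_sum]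
    refine sum_congr rfl fun i hi => ?_
    refine (sum_eq_single_of_mem i hi fun j _ hji => ?_).trans (pow_succ _ _).symm
    rw [pow_succ, mul_assoc, hp i j hji.symm, mul_zero]

theorem CStarRing.norm_sum_le_one_of_mul_eq_zero {ι B : Type*} [NormedRing B] [StarRing B]
    [CStarRing B] (s : Finset ι) {p : ι → B} (hsa : ∀ i, IsSelfAdjoint (p i))
    (hle : ∀ i, ‖p i‖ ≤ 1) (hp : ∀ i j, i ≠ j → p i * p j = 0) :
    ‖∑ i ∈ s, p i‖ ≤ 1 := by
  have hx : IsSelfAdjoint (∑ i ∈ s, p i) := isSelfAdjoint_sum s fun i _ => hsa i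
  have hbound (k : ℕ) : ‖∑ i ∈ s, p i‖ ^ 2 ^ k ≤ #s := by
    obtain ⟨n, hn⟩ := Nat.exists_eq_add_one.mpr (Nat.two_pow_pos k)
    calc ‖∑ i ∈ s, p i‖ ^ 2 ^ k = ‖∑ i ∈ s, p i ^ 2 ^ k‖ := by
          rw [← hx.norm_pow_two_pow, hn, s.sum_pow_succ_of_mul_eq_zero hp]
      _ ≤ ∑ i ∈ s, ‖p i ^ 2 ^ k‖ := norm_sum_le _ _
      _ ≤ ∑ _i ∈ s, (1 : ℝ) := by
          refine sum_le_sum fun i _ => ?_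
          rw [(hsa i).norm_pow_two_pow]
          exact pow_le_one₀ (norm_nonneg _) (hle i)
      _ = #s := by simp
  by_contra! hlt
  obtain ⟨k, hk⟩ := pow_unbounded_of_one_lt (#s : ℝ) hlt
  have := pow_le_pow_right₀ hlt.le (Nat.lt_two_pow_self (n := k)).le
  linarith [hbound k]

theorem CStarAlgebra.norm_sum_le_one_of_mul_eq_zero {ι A : Type*} [NonUnitalCStarAlgebra A]
    (s : Finset ι) {p : ι → A} (hsa : ∀ i, IsSelfAdjoint (p i)) (hle : ∀ i, ‖p i‖ ≤ 1)
    (hp : ∀ i j, i ≠ j → p i * p j = 0) :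
    ‖∑ i ∈ s, p i‖ ≤ 1 := by
  rw [← Unitization.norm_inr (𝕜 := ℂ), ← Unitization.inrNonUnitalStarAlgHom_apply, map_sum]
  refine CStarRing.norm_sum_le_one_of_mul_eq_zero s (fun i => (hsa i).inr ℂ)
    (fun i => (Unitization.norm_inr _).trans_le (hle i)) fun i j hij => ?_
  simp [← Unitization.inr_mul, hp i j hij]

theorem CStarAlgebra.exists_sum_eq_star_mul_self {ι A : Type*} [NonUnitalCStarAlgebra A]
    (s : Finset ι) {a : ι → A} (ha : ∀ i, ∃ b, a i = star b * b) :
    ∃ b, ∑ i ∈ s, a i = star b * b := by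
  let _ := CStarAlgebra.spectralOrder A
  have := CStarAlgebra.spectralOrderedRing A
  exact nonneg_iff_eq_star_mul_self.mp <| sum_nonneg fun i _ =>
    nonneg_iff_eq_star_mul_self.mpr (ha i)

section FiberSum

variable {ι κ A : Type*} [Fintype ι] [DecidableEq κ]

def fiberSum [AddCommMonoid A] (f : ι → κ) (x : ι → A) (k : κ) : A :=
  ∑ i with f i = k, x i

theorem sum_fiberSum [AddCommMonoid A] [Fintype κ] (f : ι → κ) (x : ι → A) :
    ∑ k, fiberSum f x k = ∑ i, x i :=
  sum_fiberwise univ f x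

theorem fiberSum_mul_fiberSum_of_ne [NonUnitalNonAssocSemiring A] (f : ι → κ) {x : ι → A}
    (hx : ∀ i j, i ≠ j → x i * x j = 0) {k k' : κ} (hk : k ≠ k') :
    fiberSum f x k * fiberSum f x k' = 0 := by
  rw [fiberSum, fiberSum, sum_mul_sum]
  refine sum_eq_zero fun i hi => sum_eq_zero fun j hj => hx i j fun hij => hk ?_
  rw [(mem_filter.mp hi).2.symm, (mem_filter.mp hj).2.symm, hij]

theorem norm_fiberSum_lt [SeminormedAddCommGroup A] (f : ι → κ) {x : ι → A} {ε : ℝ}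
    (hε : 0 < ε) (hx : ∀ i, ‖x i‖ < ε / (Fintype.card ι + 1)) (k : κ) :
    ‖fiberSum f x k‖ < ε := by
  have hcard : (Fintype.card ι : ℝ) * (ε / (Fintype.card ι + 1)) < ε := by
    rw [mul_div_assoc', div_lt_iff₀ (by positivity)]
    linarith
  calc ‖fiberSum f x k‖ ≤ ∑ i with f i = k, ‖x i‖ := norm_sum_le _ _
    _ ≤ ∑ i, ‖x i‖ := sum_le_sum_of_subset_of_nonneg (filter_subset _ _) fun _ _ _ => norm_nonneg _
    _ ≤ ∑ _i : ι, ε / (Fintype.card ι + 1) := sum_le_sum fun i _ => (hx i).le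
    _ < ε := by simpa using hcard

theorem fiberSum_mul_left {G : Type*} [Group G] [Fintype G] [AddCommMonoid A] {H : Subgroup G}
    [DecidableEq H] {f : G → H} (hf : ∀ (k : H) g, f (k * g) = k * f g) (x : G → A) (k h : H) :
    fiberSum f x (k * h) = fiberSum f (fun g => x (k * g)) h := by
  simp only [fiberSum, sum_filter]
  rw [← Equiv.sum_comp (Equiv.mulLeft (k : G))]
  simp [hf]

end FiberSum

section Rokhlin

variable {G A : Type*} [Group G] [Fintype G] [NonUnitalCStarAlgebra A]

structure IsRokhlinFamily (α : G → (A ≃⋆ₐ[ℂ] A)) (ε : ℝ) (F : Finset A) (r : G → A) : Prop where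
  exists_eq_star_mul_self : ∀ g, ∃ s, r g = star s * s
  norm_le_one : ∀ g, ‖r g‖ ≤ 1
  mul_eq_zero : ∀ g h, g ≠ h → r g * r h = 0
  norm_map_sub_lt : ∀ g h, ‖α g (r h) - r (g * h)‖ < ε
  norm_commutator_lt : ∀ a ∈ F, ∀ g, ‖r g * a - a * r g‖ < ε
  norm_sum_mul_sub_lt : ∀ a ∈ F, ‖(∑ g, r g) * a - a‖ < ε

theorem rokhlinProperty_iff (α : G → (A ≃⋆ₐ[ℂ] A)) :
    RokhlinProperty α ↔ ∀ ε, 0 < ε → ∀ F, ∃ r, IsRokhlinFamily α ε F r := by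
  refine forall₂_congr fun ε _ => forall_congr' fun F => exists_congr fun r => ?_
  exact ⟨fun ⟨h₁, h₂, h₃, h₄, h₅, h₆⟩ => ⟨h₁, h₂, h₃, h₄, h₅, h₆⟩,
    fun ⟨h₁, h₂, h₃, h₄, h₅, h₆⟩ => ⟨h₁, h₂, h₃, h₄, h₅, h₆⟩⟩

theorem IsRokhlinFamily.restrict {α : G → (A ≃⋆ₐ[ℂ] A)} {ε : ℝ} {F : Finset A} {r : G → A}
    (hr : IsRokhlinFamily α (ε / (Fintype.card G + 1)) F r) (hε : 0 < ε)
    (H : Subgroup G) [Fintype H] [DecidableEq H] {f : G → H}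
    (hf : ∀ (k : H) g, f (k * g) = k * f g) :
    IsRokhlinFamily (fun h : H => α h) ε F (fiberSum f r) where
  exists_eq_star_mul_self _ :=
    CStarAlgebra.exists_sum_eq_star_mul_self _ hr.exists_eq_star_mul_self
  norm_le_one _ := by
    refine CStarAlgebra.norm_sum_le_one_of_mul_eq_zero _ (fun g => ?_) hr.norm_le_one
      hr.mul_eq_zero
    obtain ⟨s, hs⟩ := hr.exists_eq_star_mul_self g
    exact hs ▸ .star_mul_self s
  mul_eq_zero _ _ := fiberSum_mul_fiberSum_of_ne f hr.mul_eq_zero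
  norm_map_sub_lt k h := by
    have : α k (fiberSum f r h) - fiberSum f r (k * h) =
        fiberSum f (fun g => α k (r g) - r (k * g)) h := by
      rw [fiberSum_mul_left hf]
      simp only [fiberSum, map_sum, sum_sub_distrib]
    rw [this]
    exact norm_fiberSum_lt f hε (fun g => hr.norm_map_sub_lt k g) h
  norm_commutator_lt a ha h := by
    have : fiberSum f r h * a - a * fiberSum f r h = fiberSum f (fun g => r g * a - a * r g) h := by
      simp only [fiberSum, sum_mul, mul_sum, sum_sub_distrib]
    rw [this]
    exact norm_fiberSum_lt f hε (fun g => hr.norm_commutator_lt a ha g) h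
  norm_sum_mul_sub_lt a ha := by
    rw [sum_fiberSum]
    exact (hr.norm_sum_mul_sub_lt a ha).trans_le
      (div_le_self hε.le (le_add_of_nonneg_left (Nat.cast_nonneg _)))

end Rokhlin

theorem stmt6_general {G A : Type*} [Group G] [Fintype G] [NonUnitalCStarAlgebra A]
    (α : G → (A ≃⋆ₐ[ℂ] A))
    (hRokhlin : RokhlinProperty α)
    (H : Subgroup G) [Fintype H] :
    RokhlinProperty (fun h : H => α (h : G)) := by
  classical
  obtain ⟨T, hT, -⟩ := Subgroup.exists_isComplement_right H 1
  rw [rokhlinProperty_iff] at hRokhlin ⊢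
  intro ε hε F
  obtain ⟨r, hr⟩ := hRokhlin (ε / (Fintype.card G + 1)) (by positivity) F
  exact ⟨_, hr.restrict hε H (f := fun g => (hT.equiv g).1) fun k g => by rw [hT.equiv_mul_left]⟩

/-- If an action of a finite group `G` on a C*-algebra has the Rokhlin property,
then its restriction to any subgroup `H ≤ G` has the Rokhlin property. -/
theorem stmt6 {G A : Type*} [Group G] [Fintype G] [NonUnitalCStarAlgebra A]
    (α : G → (A ≃⋆ₐ[ℂ] A)) (hα : ∀ g h a, α (g * h) a = α g (α h a))
    (hRokhlin : RokhlinProperty α)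
    (H : Subgroup G) [Fintype H] :
    RokhlinProperty (fun h : H => α (h : G)) :=
  stmt6_general α hRokhlin H
end

section
/- Let A and C be C*-algebras, let G be a finite group, let α : G → Aut(A) and β : G → Aut(C) be actions of G, and let π : A → C be a surjective *-homomorphism that is equivariant, i.e., π ∘ α_g = β_g ∘ π for all g ∈ G. If α has the Rokhlin property, then β has the Rokhlin property. (In particular, the induced action on the quotient of A by a G-invariant closed two-sided ideal has the Rokhlin property.) -/
section RokhlinTower

variable {G A C : Type*} [Group G] [Fintype G] [NonUnitalCStarAlgebra A]
  [NonUnitalCStarAlgebra C]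

def IsRokhlinTower (α : G → (A ≃⋆ₐ[ℂ] A)) (ε : ℝ) (S : Set A) (r : G → A) : Prop :=
  (∀ g, ∃ s, r g = star s * s) ∧
  (∀ g, ‖r g‖ ≤ 1) ∧
  (∀ g h, g ≠ h → r g * r h = 0) ∧
  (∀ g h, ‖α g (r h) - r (g * h)‖ < ε) ∧
  (∀ a ∈ S, ∀ g, ‖r g * a - a * r g‖ < ε) ∧
  (∀ a ∈ S, ‖(∑ g, r g) * a - a‖ < ε)

theorem rokhlinProperty_iff_exists_isRokhlinTower (α : G → (A ≃⋆ₐ[ℂ] A)) :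
    RokhlinProperty α ↔ ∀ ε > 0, ∀ F : Finset A, ∃ r, IsRokhlinTower α ε F r :=
  Iff.rfl

theorem IsRokhlinTower.mono {α : G → (A ≃⋆ₐ[ℂ] A)} {ε : ℝ} {S T : Set A} {r : G → A}
    (hr : IsRokhlinTower α ε S r) (hTS : T ⊆ S) : IsRokhlinTower α ε T r := by
  obtain ⟨hpos, hnorm, horth, hact, hcomm, hsum⟩ := hr
  exact ⟨hpos, hnorm, horth, hact, fun a ha => hcomm a (hTS ha), fun a ha => hsum a (hTS ha)⟩

theorem IsRokhlinTower.map {α : G → (A ≃⋆ₐ[ℂ] A)} {β : G → (C ≃⋆ₐ[ℂ] C)} {ε : ℝ} {S : Set A}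
    {r : G → A} (hr : IsRokhlinTower α ε S r) (π : A →⋆ₙₐ[ℂ] C)
    (hequiv : ∀ g a, π (α g a) = β g (π a)) :
    IsRokhlinTower β ε (π '' S) (π ∘ r) := by
  obtain ⟨hpos, hnorm, horth, hact, hcomm, hsum⟩ := hr
  have hcontr (x : A) : ‖π x‖ ≤ ‖x‖ := NonUnitalStarAlgHom.norm_apply_le π x
  refine ⟨fun g => ?_, fun g => (hcontr _).trans (hnorm g), fun g h hgh => ?_,
    fun g h => ?_, ?_, ?_⟩
  · obtain ⟨s, hs⟩ := hpos g
    exact ⟨π s, by simp only [Function.comp_apply, hs, map_mul, map_star]⟩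
  · simp only [Function.comp_apply, ← map_mul, horth g h hgh, map_zero]
  · calc ‖β g (π (r h)) - π (r (g * h))‖ = ‖π (α g (r h) - r (g * h))‖ := by
          rw [map_sub, hequiv]
      _ < ε := (hcontr _).trans_lt (hact g h)
  · rintro _ ⟨a, ha, rfl⟩ g
    calc ‖π (r g) * π a - π a * π (r g)‖ = ‖π (r g * a - a * r g)‖ := by
          rw [map_sub, map_mul, map_mul]
      _ < ε := (hcontr _).trans_lt (hcomm a ha g)
  · rintro _ ⟨a, ha, rfl⟩
    calc ‖(∑ g, π (r g)) * π a - π a‖ = ‖π ((∑ g, r g) * a - a)‖ := by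
          rw [map_sub, map_mul, map_sum]
      _ < ε := (hcontr _).trans_lt (hsum a ha)

end RokhlinTower

theorem stmt7_general {G A C : Type*} [Group G] [Fintype G]
    [NonUnitalCStarAlgebra A] [NonUnitalCStarAlgebra C]
    (α : G → (A ≃⋆ₐ[ℂ] A))
    (β : G → (C ≃⋆ₐ[ℂ] C))
    (π : A →⋆ₙₐ[ℂ] C) (hsurj : Function.Surjective π)
    (hequiv : ∀ (g : G) (a : A), π (α g a) = β g (π a))
    (hRokhlin : RokhlinProperty α) :
    RokhlinProperty β := by
  classical
  rw [rokhlinProperty_iff_exists_isRokhlinTower] at hRokhlin ⊢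
  intro ε hε F
  choose lift hlift using hsurj
  obtain ⟨r, hr⟩ := hRokhlin ε hε (F.image lift)
  refine ⟨π ∘ r, (hr.map π hequiv).mono fun c hc => ⟨lift c, ?_, hlift c⟩⟩
  exact Finset.mem_coe.2 (Finset.mem_image_of_mem lift hc)

/-- The Rokhlin property passes to equivariant surjective images (in particular,
to quotients by invariant ideals). -/
theorem stmt7 {G A C : Type*} [Group G] [Fintype G]
    [NonUnitalCStarAlgebra A] [NonUnitalCStarAlgebra C]
    (α : G → (A ≃⋆ₐ[ℂ] A)) (hα : ∀ g h a, α (g * h) a = α g (α h a))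
    (β : G → (C ≃⋆ₐ[ℂ] C)) (hβ : ∀ g h c, β (g * h) c = β g (β h c))
    (π : A →⋆ₙₐ[ℂ] C) (hsurj : Function.Surjective π)
    (hequiv : ∀ (g : G) (a : A), π (α g a) = β g (π a))
    (hRokhlin : RokhlinProperty α) :
    RokhlinProperty β :=
  stmt7_general α β π hsurj hequiv hRokhlin
end

section
/- Let A be a C*-algebra, let G be a finite group, and let α : G → Aut(A) be an action of G on A. Suppose that for every finite subset F ⊆ A and every ε > 0 there exist a C*-algebra B, an action β : G → Aut(B) with the Rokhlin property, and a *-homomorphism φ : B → A which is equivariant (φ ∘ β_g = α_g ∘ φ for all g ∈ G) such that dist(a, φ(B)) < ε for all a ∈ F. Then α has the Rokhlin property. -/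
universe u

/-!
Approximate each `a ∈ F` within `δ` by some `φ (b a)` and take a Rokhlin tower `(r g)` for `β`
relative to the `b a`. Its image `(φ (r g))` is a Rokhlin tower for `α`: positivity,
contractivity, orthogonality and approximate equivariance pass through the contractive
equivariant `*`-homomorphism `φ`, while the commutator and unit conditions at `a` differ from
those at `φ (b a)` by at most `2δ` and `(‖∑ g, r g‖ + 1) δ ≤ (|G| + 1) δ`.
-/

lemma exists_norm_sub_lt_of_infDist_range_lt {ι E : Type*} [Nonempty ι]
    [SeminormedAddCommGroup E] {f : ι → E} {a : E} {δ : ℝ}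
    (h : Metric.infDist a (Set.range f) < δ) : ∃ i, ‖a - f i‖ < δ := by
  obtain ⟨_, ⟨i, rfl⟩, hi⟩ := (Metric.infDist_lt_iff (Set.range_nonempty f)).mp h
  exact ⟨i, by rwa [← dist_eq_norm]⟩

section Approximation

variable {R : Type*} [NonUnitalSeminormedRing R]

lemma norm_commutator_le_add_norm_sub (r a a' : R) :
    ‖r * a - a * r‖ ≤ ‖r * a' - a' * r‖ + 2 * ‖r‖ * ‖a - a'‖ := by
  calc ‖r * a - a * r‖ = ‖(r * a' - a' * r) + (r * (a - a') - (a - a') * r)‖ := by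
        congr 1; noncomm_ring
    _ ≤ ‖r * a' - a' * r‖ + (‖r‖ * ‖a - a'‖ + ‖a - a'‖ * ‖r‖) := by
        grw [norm_add_le, norm_sub_le (r * (a - a')), norm_mul_le r, norm_mul_le (a - a')]
    _ = ‖r * a' - a' * r‖ + 2 * ‖r‖ * ‖a - a'‖ := by ring

lemma norm_mul_sub_self_le_add_norm_sub (s a a' : R) :
    ‖s * a - a‖ ≤ ‖s * a' - a'‖ + (‖s‖ + 1) * ‖a - a'‖ := by
  calc ‖s * a - a‖ = ‖(s * a' - a') + (s * (a - a') - (a - a'))‖ := by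
        congr 1; noncomm_ring
    _ ≤ ‖s * a' - a'‖ + (‖s‖ * ‖a - a'‖ + ‖a - a'‖) := by
        grw [norm_add_le, norm_sub_le (s * (a - a')), norm_mul_le s]
    _ = ‖s * a' - a'‖ + (‖s‖ + 1) * ‖a - a'‖ := by ring

end Approximation

lemma norm_sum_le_card_of_norm_le_one {ι E : Type*} [Fintype ι] [SeminormedAddCommGroup E]
    {r : ι → E} (hr : ∀ i, ‖r i‖ ≤ 1) : ‖∑ i, r i‖ ≤ Fintype.card ι := by
  simpa using norm_sum_le_of_le Finset.univ fun i _ => hr i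

section Transfer

variable {A B : Type*} [NonUnitalCStarAlgebra A] [NonUnitalCStarAlgebra B] (φ : B →⋆ₙₐ[ℂ] A)
  {b : B} {a : A} {η δ : ℝ}

lemma NonUnitalStarAlgHom.norm_map_commutator_lt {r : B} (hr : ‖r‖ ≤ 1)
    (hrb : ‖r * b - b * r‖ < η) (ha : ‖a - φ b‖ ≤ δ) :
    ‖φ r * a - a * φ r‖ < η + 2 * δ := by
  have hφr : ‖φ r‖ ≤ 1 := (norm_apply_le φ r).trans hr
  have hφrb : ‖φ r * φ b - φ b * φ r‖ < η := by
    rw [← map_mul, ← map_mul, ← map_sub]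
    exact (norm_apply_le φ _).trans_lt hrb
  calc ‖φ r * a - a * φ r‖ ≤ ‖φ r * φ b - φ b * φ r‖ + 2 * ‖φ r‖ * ‖a - φ b‖ :=
        norm_commutator_le_add_norm_sub _ _ _
    _ < η + 2 * 1 * δ := add_lt_add_of_lt_of_le hφrb (by gcongr)
    _ = η + 2 * δ := by ring

lemma NonUnitalStarAlgHom.norm_map_mul_sub_self_lt {s : B} (hsb : ‖s * b - b‖ < η)
    (ha : ‖a - φ b‖ ≤ δ) : ‖φ s * a - a‖ < η + (‖s‖ + 1) * δ := by
  have hφsb : ‖φ s * φ b - φ b‖ < η := by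
    rw [← map_mul, ← map_sub]
    exact (norm_apply_le φ _).trans_lt hsb
  calc ‖φ s * a - a‖ ≤ ‖φ s * φ b - φ b‖ + (‖φ s‖ + 1) * ‖a - φ b‖ :=
        norm_mul_sub_self_le_add_norm_sub _ _ _
    _ < η + (‖s‖ + 1) * δ := by grw [hφsb, norm_apply_le φ s, ha]

end Transfer

theorem stmt8_general {G : Type*} {A : Type u} [Group G] [Fintype G] [NonUnitalCStarAlgebra A]
    (α : G → (A ≃⋆ₐ[ℂ] A))
    (happrox : ∀ (F : Finset A) (ε : ℝ), 0 < ε →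
      ∃ (B : Type u) (_ : NonUnitalCStarAlgebra B) (β : G → (B ≃⋆ₐ[ℂ] B))
        (φ : B →⋆ₙₐ[ℂ] A),
        (∀ g h b, β (g * h) b = β g (β h b)) ∧
        RokhlinProperty β ∧
        (∀ (g : G) (b : B), φ (β g b) = α g (φ b)) ∧
        (∀ a ∈ F, Metric.infDist a (Set.range φ) < ε)) :
    RokhlinProperty α := by
  classical
  intro ε hε F
  set n : ℝ := (Fintype.card G : ℝ)
  set δ := ε / (3 * (n + 1))
  have hn : 0 ≤ n := by positivity
  have hδ : 0 < δ := by positivity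
  have hnδ : (n + 1) * δ = ε / 3 := by simp only [δ]; field_simp
  have hδ_le : δ ≤ ε / 3 := hnδ ▸ le_mul_of_one_le_left hδ.le (by linarith)
  obtain ⟨B, _, β, φ, -, hβ, hφ, hF⟩ := happrox F δ hδ
  choose! b hb using fun a ha => exists_norm_sub_lt_of_infDist_range_lt (hF a ha)
  obtain ⟨r, hr_pos, hr_le, hr_orth, hr_eqv, hr_comm, hr_sum⟩ :=
    hβ (ε / 3) (by positivity) (F.image b)
  have hφr (g : G) : ‖φ (r g)‖ ≤ 1 := (NonUnitalStarAlgHom.norm_apply_le φ _).trans (hr_le g)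
  refine ⟨fun g => φ (r g), fun g => ?_, hφr, fun g h hgh => ?_, fun g h => ?_,
    fun a ha g => ?_, fun a ha => ?_⟩
  · obtain ⟨s, hs⟩ := hr_pos g
    exact ⟨φ s, by simp only [hs, map_mul, map_star]⟩
  · rw [← map_mul, hr_orth g h hgh, map_zero]
  · calc ‖α g (φ (r h)) - φ (r (g * h))‖ = ‖φ (β g (r h) - r (g * h))‖ := by
          rw [map_sub, hφ]
      _ ≤ ‖β g (r h) - r (g * h)‖ := NonUnitalStarAlgHom.norm_apply_le φ _
      _ < ε := (hr_eqv g h).trans (by linarith)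
  · exact (φ.norm_map_commutator_lt (hr_le g) (hr_comm _ (F.mem_image_of_mem b ha) g)
      (hb a ha).le).trans_le (by linarith)
  · rw [← map_sum]
    refine (φ.norm_map_mul_sub_self_lt (hr_sum _ (F.mem_image_of_mem b ha))
      (hb a ha).le).trans_le ?_
    grw [norm_sum_le_card_of_norm_le_one hr_le]
    linarith

/-- If an action `α` of a finite group `G` on a C*-algebra `A` can be locally
approximated by equivariant images of actions with the Rokhlin property, then `α`
has the Rokhlin property. -/
theorem stmt8 {G : Type*} {A : Type u} [Group G] [Fintype G] [NonUnitalCStarAlgebra A]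
    (α : G → (A ≃⋆ₐ[ℂ] A)) (hα : ∀ g h a, α (g * h) a = α g (α h a))
    (happrox : ∀ (F : Finset A) (ε : ℝ), 0 < ε →
      ∃ (B : Type u) (_ : NonUnitalCStarAlgebra B) (β : G → (B ≃⋆ₐ[ℂ] B))
        (φ : B →⋆ₙₐ[ℂ] A),
        (∀ g h b, β (g * h) b = β g (β h b)) ∧
        RokhlinProperty β ∧
        (∀ (g : G) (b : B), φ (β g b) = α g (φ b)) ∧
        (∀ a ∈ F, Metric.infDist a (Set.range φ) < ε)) :
    RokhlinProperty α :=
  stmt8_general α happrox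
end

section
/- Let A be a nonzero C*-algebra, let G be a finite group, and let α : G → Aut(A) be an action of G on A with the Rokhlin property. Then α is pointwise outer: for every g ∈ G with g ≠ e there is no unitary u in the multiplier algebra 𝓜(A) of A (u* u = u u* = 1) such that ι(α_g(a)) = u ι(a) u* for all a ∈ A, where ι : A → 𝓜(A) is the canonical *-embedding. -/
/-!
Suppose a unitary `u ∈ 𝓜(A)` implements `α g` with `g ≠ 1`, and let `r h` be Rokhlin elements for
a tolerance `ε`. Since `α g (r h) ≈ r (g * h)` is orthogonal to `r h`, the product
`r h * u * r h = r h * α g (r h) * u` is small; as `r h` almost commutes with `a` and with `u * a`,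
this gives `‖a * r h ^ 2‖ = ‖u * a * r h ^ 2‖ ≲ 3ε`, hence `‖a * r h‖ ≲ √(3ε)` by the C⋆-identity.
Since `∑ h, r h` is an approximate unit for `a`, summing over `h` gives
`‖a‖ ≤ ε + |G| (ε + √(3ε))` whenever `‖a‖ ≤ 1`; letting `ε → 0` forces `A = 0`.
-/

open scoped MultiplierAlgebra

lemma CStarRing.eq_of_forall_mul_eq {A : Type*} [NonUnitalNormedRing A] [StarRing A] [CStarRing A]
    {z w : A} (h : ∀ y, y * z = y * w) : z = w := by
  have : star (z - w) * (z - w) = 0 := by rw [mul_sub, h, sub_self]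
  exact sub_eq_zero.mp (CStarRing.star_mul_self_eq_zero_iff _ |>.mp this)

namespace DoubleCentralizer

variable {A : Type*} [NonUnitalCStarAlgebra A]

lemma norm_coe (a : A) : ‖(a : 𝓜(ℂ, A))‖ = ‖a‖ := by
  rw [← norm_fst, coe_fst, ContinuousLinearMap.opNorm_mul_apply]

lemma coe_mul (a b : A) : ((a * b : A) : 𝓜(ℂ, A)) = a * b :=
  map_mul (coeHom (𝕜 := ℂ)) a b

lemma coe_sub (a b : A) : ((a - b : A) : 𝓜(ℂ, A)) = a - b :=
  map_sub (coeHom (𝕜 := ℂ)) a b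

lemma fst_apply_mul (u : 𝓜(ℂ, A)) (a b : A) : u.fst (a * b) = u.fst a * b :=
  CStarRing.eq_of_forall_mul_eq fun y => by
    rw [← u.central, ← mul_assoc, ← mul_assoc, u.central]

lemma coe_fst_apply (u : 𝓜(ℂ, A)) (a : A) : ((u.fst a : A) : 𝓜(ℂ, A)) = u * a := by
  ext b
  · exact (fst_apply_mul u a b).symm
  · exact (u.central b a).symm

end DoubleCentralizer

lemma norm_mul_sq_le_of_isSelfAdjoint {B : Type*} [NonUnitalNormedRing B] [StarRing B]
    [CStarRing B] {x : B} (hx : IsSelfAdjoint x) (a : B) :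
    ‖a * x‖ ^ 2 ≤ ‖a * (x * x)‖ * ‖a‖ :=
  calc ‖a * x‖ ^ 2 = ‖a * (x * x) * star a‖ := by
        rw [sq, ← CStarRing.norm_self_mul_star, star_mul, hx.star_eq, mul_assoc, mul_assoc,
          mul_assoc]
    _ ≤ ‖a * (x * x)‖ * ‖a‖ := (norm_mul_le _ _).trans_eq (by rw [norm_star])

lemma norm_mul_mul_self_le_of_conj_unitary {B : Type*} [NormedRing B] [StarRing B] [CStarRing B]
    {u x y a : B} (hu : u ∈ unitary B) (hy : y = u * x * star u) (hx : ‖x‖ ≤ 1) (ha : ‖a‖ ≤ 1) :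
    ‖a * (x * x)‖ ≤ ‖x * y‖ + ‖x * a - a * x‖ + ‖x * (u * a) - u * a * x‖ := by
  have hxux : x * u * x = x * y * u := by
    rw [hy]; simp only [mul_assoc, Unitary.star_mul_self_of_mem hu, mul_one]
  calc ‖a * (x * x)‖ = ‖u * (a * (x * x))‖ := (CStarRing.norm_mem_unitary_mul _ hu).symm
    _ = ‖x * y * u * a + x * u * (a * x - x * a) + (u * a * x - x * (u * a)) * x‖ := by
        rw [← hxux]; noncomm_ring
    _ ≤ ‖x * y‖ * ‖a‖ + ‖x‖ * ‖a * x - x * a‖ + ‖u * a * x - x * (u * a)‖ * ‖x‖ := by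
        refine (norm_add₃_le ..).trans (add_le_add_three ?_ ?_ (norm_mul_le _ _))
        · exact (norm_mul_le _ _).trans_eq (by rw [CStarRing.norm_mul_mem_unitary _ hu])
        · exact (norm_mul_le _ _).trans_eq (by rw [CStarRing.norm_mul_mem_unitary _ hu])
    _ ≤ ‖x * y‖ + ‖x * a - a * x‖ + ‖x * (u * a) - u * a * x‖ := by
        rw [norm_sub_rev (a * x), norm_sub_rev (u * a * x)]
        gcongr
        · exact mul_le_of_le_one_right (norm_nonneg _) ha
        · exact mul_le_of_le_one_left (norm_nonneg _) hx
        · exact mul_le_of_le_one_right (norm_nonneg _) hx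

lemma norm_le_norm_sum_mul_sub_add {ι R : Type*} [Fintype ι] [NonUnitalSeminormedRing R] (r : ι → R)
    (a : R) :
    ‖a‖ ≤ ‖(∑ i, r i) * a - a‖ + ∑ i, (‖r i * a - a * r i‖ + ‖a * r i‖) :=
  calc ‖a‖ = ‖-((∑ i, r i) * a - a) + ∑ i, ((r i * a - a * r i) + a * r i)‖ := by
        simp only [sub_add_cancel, Finset.sum_mul, neg_sub]
    _ ≤ ‖(∑ i, r i) * a - a‖ + ∑ i, (‖r i * a - a * r i‖ + ‖a * r i‖) := by
        refine (norm_add_le _ _).trans (add_le_add (norm_neg _).le ?_)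
        exact (norm_sum_le _ _).trans (Finset.sum_le_sum fun i _ => norm_add_le _ _)

namespace RokhlinProperty

open DoubleCentralizer Filter Topology

variable {G A : Type*} [Group G] [Fintype G] [NonUnitalCStarAlgebra A] {α : G → (A ≃⋆ₐ[ℂ] A)}

lemma norm_le_of_implemented (hR : RokhlinProperty α) {g : G} (hg : g ≠ 1)
    {u : 𝓜(ℂ, A)} (hu : u ∈ unitary 𝓜(ℂ, A))
    (himp : ∀ a : A, ((α g a : A) : 𝓜(ℂ, A)) = u * a * star u)
    {a : A} (ha : ‖a‖ ≤ 1) {ε : ℝ} (hε : 0 < ε) :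
    ‖a‖ ≤ ε + Fintype.card G * (ε + √(3 * ε)) := by
  classical
  obtain ⟨r, hpos, hle, horth, hequivariant, hcomm, hunit⟩ := hR ε hε {a, u.fst a}
  have hsmall : ∀ h, ‖r h * α g (r h)‖ < ε := fun h => by
    have : r h * r (g * h) = 0 := horth h (g * h) fun e => hg (mul_eq_right.mp e.symm)
    calc ‖r h * α g (r h)‖ = ‖r h * (α g (r h) - r (g * h))‖ := by rw [mul_sub, this, sub_zero]
      _ ≤ ‖α g (r h) - r (g * h)‖ :=
          (norm_mul_le _ _).trans (mul_le_of_le_one_left (norm_nonneg _) (hle h))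
      _ < ε := hequivariant g h
  have hsqrt : ∀ h, ‖a * r h‖ ≤ √(3 * ε) := fun h => by
    have key := norm_mul_mul_self_le_of_conj_unitary hu (himp (r h))
      (by rw [norm_coe]; exact hle h) (by rw [norm_coe]; exact ha)
    rw [← coe_fst_apply u a] at key
    simp only [← coe_mul, ← coe_sub, norm_coe] at key
    have hsa : IsSelfAdjoint (r h) := by
      obtain ⟨s, hs⟩ := hpos h
      exact hs ▸ IsSelfAdjoint.star_mul_self s
    refine Real.le_sqrt_of_sq_le ((norm_mul_sq_le_of_isSelfAdjoint hsa a).trans ?_)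
    calc ‖a * (r h * r h)‖ * ‖a‖ ≤ ‖a * (r h * r h)‖ := mul_le_of_le_one_right (norm_nonneg _) ha
      _ ≤ 3 * ε := by
        linarith [hsmall h, hcomm a (by simp) h, hcomm (u.fst a) (by simp) h]
  calc ‖a‖ ≤ ‖(∑ h, r h) * a - a‖ + ∑ h, (‖r h * a - a * r h‖ + ‖a * r h‖) :=
        norm_le_norm_sum_mul_sub_add r a
    _ ≤ ε + ∑ _h : G, (ε + √(3 * ε)) := by
        gcongr with h
        · exact (hunit a (by simp)).le
        · exact (hcomm a (by simp) h).le
        · exact hsqrt h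
    _ = ε + Fintype.card G * (ε + √(3 * ε)) := by
        rw [Finset.sum_const, Finset.card_univ, nsmul_eq_mul]

lemma eq_zero_of_implemented (hR : RokhlinProperty α) {g : G} (hg : g ≠ 1)
    {u : 𝓜(ℂ, A)} (hu : u ∈ unitary 𝓜(ℂ, A))
    (himp : ∀ a : A, ((α g a : A) : 𝓜(ℂ, A)) = u * a * star u)
    {a : A} (ha : ‖a‖ ≤ 1) : a = 0 := by
  have hlim : Tendsto (fun ε : ℝ => ε + Fintype.card G * (ε + √(3 * ε))) (𝓝[>] 0) (𝓝 0) := by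
    have hcont : Continuous fun ε : ℝ => ε + Fintype.card G * (ε + √(3 * ε)) := by fun_prop
    simpa using (hcont.tendsto 0).mono_left nhdsWithin_le_nhds
  refine norm_le_zero_iff.mp (ge_of_tendsto hlim ?_)
  exact eventually_nhdsWithin_of_forall fun ε hε =>
    hR.norm_le_of_implemented hg hu himp ha hε

end RokhlinProperty

theorem stmt11_general {G A : Type*} [Group G] [Fintype G] [NonUnitalCStarAlgebra A]
    [Nontrivial A]
    (α : G → (A ≃⋆ₐ[ℂ] A))
    (hRokhlin : RokhlinProperty α) :
    ∀ g : G, g ≠ 1 →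
      ¬ ∃ u : 𝓜(ℂ, A),
        (star u * u = 1 ∧ u * star u = 1) ∧
        ∀ a : A, DoubleCentralizer.coe ℂ (α g a)
          = u * DoubleCentralizer.coe ℂ a * star u := by
  rintro g hg ⟨u, hu, himp⟩
  obtain ⟨b, hb⟩ := exists_ne (0 : A)
  have hnorm : ‖(‖b‖⁻¹ : ℂ) • b‖ = 1 := norm_smul_inv_norm hb
  have hzero := hRokhlin.eq_zero_of_implemented hg (Unitary.mem_iff.mpr hu) himp hnorm.le
  rw [hzero, norm_zero] at hnorm
  exact zero_ne_one hnorm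

/-- An action of a finite group on a nonzero C*-algebra with the Rokhlin property
is pointwise outer: for `g ≠ 1`, the automorphism `α g` is not implemented by any
unitary of the multiplier algebra `𝓜(ℂ, A)`. -/
theorem stmt11 {G A : Type*} [Group G] [Fintype G] [NonUnitalCStarAlgebra A]
    [Nontrivial A]
    (α : G → (A ≃⋆ₐ[ℂ] A)) (hα : ∀ g h a, α (g * h) a = α g (α h a))
    (hRokhlin : RokhlinProperty α) :
    ∀ g : G, g ≠ 1 →
      ¬ ∃ u : 𝓜(ℂ, A),
        (star u * u = 1 ∧ u * star u = 1) ∧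
        ∀ a : A, DoubleCentralizer.coe ℂ (α g a)
          = u * DoubleCentralizer.coe ℂ a * star u :=
  stmt11_general α hRokhlin
end

section
/- Let A be a C*-algebra, let 0 < ε < 1, let a ∈ A be a positive contraction, and let b ∈ A satisfy ‖b − a‖ < ε. Then ‖(b* b)^{1/2} − a‖ < 2 ε^{1/2}, where (b* b)^{1/2} denotes the positive square root of the positive element b* b given by the continuous functional calculus. -/
/-!
The square root is operator monotone, so for positive `x, y` the inequality
`x ≤ y + ‖x - y‖` gives `√x ≤ √(y + ‖x - y‖) ≤ √y + √‖x - y‖`, the last step being the scalar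
inequality `√(t + r) ≤ √t + √r` under the functional calculus of `y`. By symmetry
`‖√x - √y‖ ≤ √‖x - y‖`. With `x = b⋆b` and `y = a⋆a = a²` (so `√y = a`) we have
`‖b⋆b - a⋆a‖ ≤ (‖b‖ + ‖a‖) ‖b - a‖ < (2 + ε) ε < 4ε`.
-/

open scoped NNReal CStarAlgebra

lemma IsSelfAdjoint.norm_le_of_neg_algebraMap_le_of_le_algebraMap {A : Type*}
    [CStarAlgebra A] [PartialOrder A] [StarOrderedRing A] {a : A} (ha : IsSelfAdjoint a) {r : ℝ}
    (hr : 0 ≤ r) (hl : -algebraMap ℝ A r ≤ a) (hu : a ≤ algebraMap ℝ A r) : ‖a‖ ≤ r := by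
  cases subsingleton_or_nontrivial A
  · simp [Subsingleton.elim a 0, hr]
  rw [← map_neg] at hl
  rcases CStarAlgebra.norm_or_neg_norm_mem_spectrum ha with h | h
  · exact (le_algebraMap_iff_spectrum_le ha).mp hu _ h
  · exact neg_le_neg_iff.mp ((algebraMap_le_iff_le_spectrum ha).mp hl _ h)

namespace CFC

section Unital

variable {A : Type*} [CStarAlgebra A] [PartialOrder A] [StarOrderedRing A]

lemma sqrt_add_algebraMap_le {a : A} (ha : 0 ≤ a) (r : ℝ≥0) :
    sqrt (a + algebraMap ℝ≥0 A r) ≤ sqrt a + algebraMap ℝ≥0 A (NNReal.sqrt r) := by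
  have hcfc : a + algebraMap ℝ≥0 A r = cfc (fun t => t + r) a := by
    rw [cfc_add_const r (fun t => t) a, cfc_id' ℝ≥0 a]
  rw [hcfc, sqrt_eq_cfc, sqrt_eq_cfc, ← cfc_comp' NNReal.sqrt (fun t => t + r) a,
    ← cfc_add_const _ NNReal.sqrt a]
  refine cfc_mono fun t _ => ?_
  rw [NNReal.sqrt_le_iff_le_sq, add_sq, NNReal.sq_sqrt, NNReal.sq_sqrt]
  exact add_le_add_left le_self_add r

lemma sqrt_sub_sqrt_le_algebraMap {a b : A} (ha : 0 ≤ a) (hb : 0 ≤ b) :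
    sqrt a - sqrt b ≤ algebraMap ℝ A √‖a - b‖ := by
  have hab : a ≤ b + algebraMap ℝ≥0 A ‖a - b‖₊ := by
    rw [← sub_le_iff_le_add', IsScalarTower.algebraMap_apply ℝ≥0 ℝ A]
    exact ((IsSelfAdjoint.of_nonneg ha).sub (.of_nonneg hb)).le_algebraMap_norm_self
  have h := (sqrt_le_sqrt _ _ hab).trans (sqrt_add_algebraMap_le hb _)
  rwa [IsScalarTower.algebraMap_apply ℝ≥0 ℝ A, NNReal.algebraMap_eq_coe, Real.coe_sqrt,
    coe_nnnorm, ← sub_le_iff_le_add'] at h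

end Unital

lemma norm_sqrt_sub_sqrt_le {A : Type*} [NonUnitalCStarAlgebra A] [PartialOrder A]
    [StarOrderedRing A] {a b : A} (ha : 0 ≤ a) (hb : 0 ≤ b) :
    ‖sqrt a - sqrt b‖ ≤ √‖a - b‖ := by
  have ha' : 0 ≤ (a : A⁺¹) := Unitization.inr_nonneg_iff.mpr ha
  have hb' : 0 ≤ (b : A⁺¹) := Unitization.inr_nonneg_iff.mpr hb
  have hu := sqrt_sub_sqrt_le_algebraMap ha' hb'
  have hl := sqrt_sub_sqrt_le_algebraMap hb' ha'
  rw [← neg_sub (a : A⁺¹), norm_neg, ← neg_sub (sqrt (a : A⁺¹)), neg_le] at hl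
  have h := ((IsSelfAdjoint.of_nonneg (sqrt_nonneg _)).sub (.of_nonneg (sqrt_nonneg _))
    ).norm_le_of_neg_algebraMap_le_of_le_algebraMap (Real.sqrt_nonneg _) hl hu
  rwa [Unitization.sqrt_inr, Unitization.sqrt_inr, ← Unitization.inr_sub ℂ,
    ← Unitization.inr_sub ℂ, Unitization.norm_inr, Unitization.norm_inr] at h

end CFC

lemma norm_star_mul_self_sub_star_mul_self_le {R : Type*} [NonUnitalNormedRing R] [StarRing R]
    [NormedStarGroup R] (a b : R) :
    ‖star b * b - star a * a‖ ≤ (‖b‖ + ‖a‖) * ‖b - a‖ := by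
  have h : star b * b - star a * a = star b * (b - a) + star (b - a) * a := by
    rw [star_sub]; noncomm_ring
  calc ‖star b * b - star a * a‖ ≤ ‖star b‖ * ‖b - a‖ + ‖star (b - a)‖ * ‖a‖ := by
        rw [h]; exact norm_add_le_of_le (norm_mul_le _ _) (norm_mul_le _ _)
    _ = (‖b‖ + ‖a‖) * ‖b - a‖ := by rw [norm_star, norm_star]; ring

theorem stmt14_general {A : Type*} [NonUnitalCStarAlgebra A] [PartialOrder A] [StarOrderedRing A]
    (ε : ℝ) (hε1 : ε < 1) (a b : A)
    (ha : 0 ≤ a) (ha1 : ‖a‖ ≤ 1) (hba : ‖b - a‖ < ε) :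
    ‖cfcₙ Real.sqrt (star b * b) - a‖ < 2 * ε ^ ((1 : ℝ) / 2) := by
  have hε : 0 < ε := (norm_nonneg _).trans_lt hba
  have hb1 : ‖b‖ ≤ 1 + ε := by
    linarith [norm_le_norm_add_norm_sub' b a]
  have hsq : ‖star b * b - star a * a‖ < 4 * ε :=
    calc ‖star b * b - star a * a‖ ≤ (‖b‖ + ‖a‖) * ‖b - a‖ :=
          norm_star_mul_self_sub_star_mul_self_le a b
      _ ≤ (2 + ε) * ‖b - a‖ := mul_le_mul_of_nonneg_right (by linarith) (norm_nonneg _)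
      _ < (2 + ε) * ε := mul_lt_mul_of_pos_left hba (by linarith)
      _ < 4 * ε := by nlinarith
  have hsa : star a = a := (IsSelfAdjoint.of_nonneg ha).star_eq
  calc ‖cfcₙ Real.sqrt (star b * b) - a‖
      = ‖CFC.sqrt (star b * b) - CFC.sqrt (star a * a)‖ := by
        rw [← CFC.sqrt_eq_real_sqrt _ (star_mul_self_nonneg b), hsa, CFC.sqrt_mul_self a ha]
    _ ≤ √‖star b * b - star a * a‖ :=
        CFC.norm_sqrt_sub_sqrt_le (star_mul_self_nonneg b) (star_mul_self_nonneg a)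
    _ < √(4 * ε) := Real.sqrt_lt_sqrt (norm_nonneg _) hsq
    _ = 2 * ε ^ ((1 : ℝ) / 2) := by
        rw [Real.sqrt_mul zero_le_four, ← Real.sqrt_eq_rpow, show (4 : ℝ) = 2 ^ 2 by norm_num,
          Real.sqrt_sq zero_le_two]

/-- If `a` is a positive contraction in a C*-algebra and `‖b - a‖ < ε < 1`, then
`‖(b*b)^{1/2} - a‖ < 2 ε^{1/2}`, where `(b*b)^{1/2} = cfcₙ Real.sqrt (star b * b)`
is the positive square root of `b*b` given by the continuous functional calculus. -/
theorem stmt14 {A : Type*} [NonUnitalCStarAlgebra A] [PartialOrder A] [StarOrderedRing A]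
    (ε : ℝ) (hε0 : 0 < ε) (hε1 : ε < 1) (a b : A)
    (ha : 0 ≤ a) (ha1 : ‖a‖ ≤ 1) (hba : ‖b - a‖ < ε) :
    ‖cfcₙ Real.sqrt (star b * b) - a‖ < 2 * ε ^ ((1 : ℝ) / 2) :=
  stmt14_general ε hε1 a b ha ha1 hba
end
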